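/- arXiv:2510.27540 — 8 statements merged into one kernel-verified Lean document; each statement's English description precedes it below -/
import Mathlib

section
/- Let α ∈ (0,1) and F : ℝⁿ → ℝⁿ be α-averaged with nonempty fixed-point set 𝓕. Suppose the error bound dist(x, 𝓕) ≤ K·‖F(x) - x‖ holds for all x with dist(x, 𝓕) ≤ R, where K > 0 and R > 0. Then for any x with dist(x, 𝓕) ≤ R, dist(F(x), 𝓕) ≤ ρ·dist(x, 𝓕) with ρ = (1 - (1-α)/(α K²))^{1/2}. -/
open Metric

lemma avg_identity {E : Type*} [NormedAddCommGroup E] [InnerProductSpace ℝ E]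
    (α : ℝ) (a b : E) :
    ‖(1-α)•a + α•b‖^2 = (1-α)*‖a‖^2 + α*‖b‖^2 - α*(1-α)*‖a-b‖^2 := by
  have h : ∀ v : E, ‖v‖^2 = inner ℝ v v := fun v => (real_inner_self_eq_norm_sq v).symm
  simp only [h, inner_add_left, inner_add_right, inner_sub_left, inner_sub_right,
    real_inner_smul_left, real_inner_smul_right]
  rw [real_inner_comm b a]
  ring

theorem stmt_1 {n : ℕ} (α : ℝ) (hα : α ∈ Set.Ioo (0:ℝ) 1)
    (F N : EuclideanSpace ℝ (Fin n) → EuclideanSpace ℝ (Fin n))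
    (hN : ∀ x y, ‖N x - N y‖ ≤ ‖x - y‖)
    (hF : ∀ x, F x = (1 - α) • x + α • N x)
    (𝓕 : Set (EuclideanSpace ℝ (Fin n))) (h𝓕 : 𝓕 = {x | F x = x}) (hne : 𝓕.Nonempty)
    (K R : ℝ) (hK : 0 < K) (hR : 0 < R)
    (hEB : ∀ x, infDist x 𝓕 ≤ R → infDist x 𝓕 ≤ K * ‖F x - x‖) :
    ∀ x, infDist x 𝓕 ≤ R →
      infDist (F x) 𝓕 ≤ Real.sqrt (1 - (1 - α) / (α * K ^ 2)) * infDist x 𝓕 := by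
  obtain ⟨hα0, hα1⟩ := hα
  have hαne : α ≠ 0 := ne_of_gt hα0
  -- 𝓕 is closed
  have hNcont : Continuous N := by
    have : LipschitzWith 1 N := LipschitzWith.of_dist_le_mul (fun x y => by
      simpa [dist_eq_norm] using hN x y)
    exact this.continuous
  have hFcont : Continuous F := by
    have : F = fun x => (1-α)•x + α•N x := funext hF
    rw [this]
    exact ((continuous_id.const_smul (1-α)).add (hNcont.const_smul α))
  have hclosed : IsClosed 𝓕 := by
    rw [h𝓕]; exact isClosed_eq hFcont continuous_id
  intro x hx
  set d := infDist x 𝓕 with hd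
  obtain ⟨y, hy𝓕, hyd⟩ := hclosed.exists_infDist_eq_dist hne x
  have hFy : F y = y := by rw [h𝓕] at hy𝓕; exact hy𝓕
  have hNy : N y = y := by
    have h1 : (1-α)•y + α•N y = y := by rw [← hF y, hFy]
    have h2 : α • N y = α • y := by
      have h3 : α • N y = y - (1-α) • y := by
        rw [eq_sub_iff_add_eq, add_comm]; exact h1
      rw [h3, sub_smul, one_smul]; abel
    exact smul_right_injective _ hαne h2
  set t := ‖F x - x‖ with ht
  have key : ‖F x - y‖^2 ≤ ‖x - y‖^2 - (1-α)/α * t^2 := by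
    have hid : F x - y = (1-α)•(x-y) + α•(N x - y) := by
      rw [hF x]; module
    have hb : ‖N x - y‖ ≤ ‖x - y‖ := by
      conv_lhs => rw [← hNy]
      exact hN x y
    have hsub : (x - y) - (N x - y) = x - N x := by abel
    have hFx : t^2 = α^2 * ‖x - N x‖^2 := by
      have h3 : F x - x = α • (N x - x) := by rw [hF x]; module
      rw [ht, h3, norm_smul, Real.norm_eq_abs, abs_of_pos hα0, ← norm_sub_rev (N x) x]
      ring
    rw [hid, avg_identity, hsub]
    have hdiv : (1-α)/α * t^2 = α*(1-α)*‖x - N x‖^2 := by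
      rw [hFx]; field_simp
    nlinarith [sq_nonneg (‖x-y‖), sq_nonneg (‖N x - y‖), norm_nonneg (x-y),
      norm_nonneg (N x - y), mul_le_mul_of_nonneg_left
        (mul_self_le_mul_self (norm_nonneg (N x - y)) hb) (le_of_lt hα0)]
  have hd2 : d ≤ K * t := hEB x hx
  have hdnn : (0:ℝ) ≤ d := infDist_nonneg
  have hc : (1-α)/(α*K^2) * d^2 ≤ (1-α)/α * t^2 := by
    have h3 : d^2 ≤ K^2 * t^2 := by nlinarith
    have h4 : (1-α)/(α*K^2) * (K^2 * t^2) = (1-α)/α * t^2 := by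
      field_simp
    calc (1-α)/(α*K^2) * d^2 ≤ (1-α)/(α*K^2) * (K^2 * t^2) := by
          exact mul_le_mul_of_nonneg_left h3
            (div_nonneg (by linarith) (by positivity))
      _ = (1-α)/α * t^2 := h4
  have hle : infDist (F x) 𝓕 ≤ ‖F x - y‖ := by
    rw [← dist_eq_norm]; exact infDist_le_dist_of_mem hy𝓕
  have hxy : ‖x - y‖ = d := by rw [hd, hyd, dist_eq_norm]
  have hsq : (infDist (F x) 𝓕)^2 ≤ (1 - (1-α)/(α*K^2)) * d^2 := by
    have e1 : (infDist (F x) 𝓕)^2 ≤ ‖F x - y‖^2 :=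
      pow_le_pow_left₀ infDist_nonneg hle 2
    rw [hxy] at key
    have e2 : (1 - (1-α)/(α*K^2)) * d^2 = d^2 - (1-α)/(α*K^2) * d^2 := by ring
    rw [e2]
    linarith
  rcases eq_or_lt_of_le hdnn with h0 | hpos
  · have h0' : d = 0 := h0.symm
    have e3 : (infDist (F x) 𝓕)^2 ≤ 0 := by
      rw [h0'] at hsq; simpa using hsq
    have h6 : (infDist (F x) 𝓕)^2 = 0 := le_antisymm e3 (sq_nonneg _)
    have h5 : infDist (F x) 𝓕 = 0 := by
      exact pow_eq_zero_iff (two_ne_zero) |>.mp h6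
    rw [h5, h0', mul_zero]
  · have hconneg : 0 ≤ 1 - (1-α)/(α*K^2) := by
      by_contra hcon
      push_neg at hcon
      have : (1 - (1-α)/(α*K^2)) * d^2 < 0 :=
        mul_neg_of_neg_of_pos (by linarith) (by positivity)
      have := sq_nonneg (infDist (F x) 𝓕)
      linarith
    calc infDist (F x) 𝓕 = Real.sqrt ((infDist (F x) 𝓕)^2) :=
          (Real.sqrt_sq infDist_nonneg).symm
      _ ≤ Real.sqrt ((1 - (1-α)/(α*K^2)) * d^2) := Real.sqrt_le_sqrt hsq
      _ = Real.sqrt (1 - (1-α)/(α*K^2)) * d := by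
          rw [Real.sqrt_mul hconneg, Real.sqrt_sq hdnn]
end

section
/- Let α ∈ (0,1) and F : ℝⁿ → ℝⁿ be continuous and α-averaged with nonempty fixed-point set 𝓕, satisfying the error bound dist(x, 𝓕) ≤ K·‖F(x) - x‖ whenever dist(x, 𝓕) ≤ R (K, R > 0). Let x₀ ∈ ℝⁿ and x_{k+1} = F(x_k). Then the sequence (x_k) converges linearly to some x̄ ∈ 𝓕: there exists k₀ such that for all k ≥ k₀, ‖x_{k+1} - x̄‖ ≤ ρ̂·‖x_k - x̄‖, where ρ̂ = (1 - ((1+ρ)/2)(1-ρ)²)^{1/2} and ρ = (1 - (1-α)/(α K²))^{1/2}. -/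
open Metric Filter

set_option maxHeartbeats 1000000

private lemma sqle' {a b : ℝ} (ha : 0 ≤ a) (hb : 0 ≤ b) (h : a^2 ≤ b^2) : a ≤ b := by
  nlinarith

private lemma avg_ineq {E : Type*} [NormedAddCommGroup E] [InnerProductSpace ℝ E]
    (α : ℝ) (hα0 : 0 < α) (hα1 : α < 1) (a b : E) (hab : ‖b‖ ≤ ‖a‖) :
    ‖(1-α) • a + α • b‖^2 ≤ ‖a‖^2 - α*(1-α)*‖a - b‖^2 := by
  have h1 : ‖(1-α) • a + α • b‖^2 = (1-α)^2*‖a‖^2 + 2*((1-α)*α*inner ℝ a b) + α^2*‖b‖^2 := by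
    rw [norm_add_sq_real, norm_smul, norm_smul, real_inner_smul_left, real_inner_smul_right]
    simp [abs_of_pos hα0, abs_of_pos (by linarith : (0:ℝ) < 1 - α)]
    ring
  have h2 : ‖a - b‖^2 = ‖a‖^2 - 2*inner ℝ a b + ‖b‖^2 := norm_sub_sq_real a b
  nlinarith [mul_self_le_mul_self (norm_nonneg b) hab]

theorem stmt_2 {n : ℕ} (α : ℝ) (hα : α ∈ Set.Ioo (0:ℝ) 1)
    (F N : EuclideanSpace ℝ (Fin n) → EuclideanSpace ℝ (Fin n))
    (hFcont : Continuous F)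
    (hN : ∀ x y, ‖N x - N y‖ ≤ ‖x - y‖)
    (hF : ∀ x, F x = (1 - α) • x + α • N x)
    (𝓕 : Set (EuclideanSpace ℝ (Fin n))) (h𝓕 : 𝓕 = {x | F x = x}) (hne : 𝓕.Nonempty)
    (K R : ℝ) (hK : 0 < K) (hR : 0 < R)
    (hEB : ∀ x, infDist x 𝓕 ≤ R → infDist x 𝓕 ≤ K * ‖F x - x‖)
    (x : ℕ → EuclideanSpace ℝ (Fin n)) (hx : ∀ k, x (k + 1) = F (x k)) :
    ∃ xbar ∈ 𝓕, Tendsto x atTop (nhds xbar) ∧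
      ∃ k₀ : ℕ, ∀ k ≥ k₀,
        ‖x (k + 1) - xbar‖ ≤
          Real.sqrt (1 - ((1 + Real.sqrt (1 - (1 - α) / (α * K ^ 2))) / 2) *
            (1 - Real.sqrt (1 - (1 - α) / (α * K ^ 2))) ^ 2) * ‖x k - xbar‖ := by
  obtain ⟨hα0, hα1⟩ := hα
  have hα1' : (0:ℝ) < 1 - α := by linarith
  -- N fixes fixed points of F
  have hNfix : ∀ p ∈ 𝓕, N p = p := by
    intro p hp
    rw [h𝓕] at hp
    have h := hF p
    rw [hp] at h
    have h2 : α • N p = α • p := by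
      have h3 : α • N p = p - (1-α) • p := eq_sub_of_add_eq' h.symm
      rw [h3, sub_smul, one_smul]; abel
    exact smul_right_injective _ (ne_of_gt hα0) h2
  -- averaged inequality
  have havg : ∀ y, ∀ p ∈ 𝓕, ‖F y - p‖^2 ≤ ‖y - p‖^2 - ((1-α)/α) * ‖F y - y‖^2 := by
    intro y p hp
    have hNp := hNfix p hp
    have h1 : F y - p = (1-α) • (y - p) + α • (N y - N p) := by
      rw [hF y, hNp]
      module
    have h2 : F y - y = α • (N y - y) := by
      rw [hF y]; module
    have h3 : (y - p) - (N y - N p) = y - N y := by rw [hNp]; abel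
    have := avg_ineq α hα0 hα1 (y - p) (N y - N p) (hN y p)
    rw [← h1, h3] at this
    have h4 : ‖F y - y‖^2 = α^2 * ‖N y - y‖^2 := by
      rw [h2, norm_smul, mul_pow]
      simp [abs_of_pos hα0]
    have h5 : ‖y - N y‖ = ‖N y - y‖ := norm_sub_rev _ _
    rw [h5] at this
    rw [h4]
    have hαne : α ≠ 0 := ne_of_gt hα0
    calc ‖F y - p‖^2 ≤ ‖y - p‖^2 - α*(1-α)*‖N y - y‖^2 := this
      _ = ‖y - p‖^2 - (1-α)/α * (α^2 * ‖N y - y‖^2) := by field_simp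
  -- Fejér monotonicity
  have hfej : ∀ p ∈ 𝓕, ∀ k, ‖x (k+1) - p‖ ≤ ‖x k - p‖ := by
    intro p hp k
    have h := havg (x k) p hp
    rw [← hx k] at h
    apply sqle' (norm_nonneg _) (norm_nonneg _)
    nlinarith [sq_nonneg ‖x (k+1) - x k‖, div_nonneg (le_of_lt hα1') (le_of_lt hα0),
      mul_nonneg (div_nonneg (le_of_lt hα1') (le_of_lt hα0)) (sq_nonneg ‖x (k+1) - x k‖)]
  have hfej' : ∀ p ∈ 𝓕, ∀ j k, j ≤ k → ‖x k - p‖ ≤ ‖x j - p‖ := by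
    intro p hp j k hjk
    induction k, hjk using Nat.le_induction with
    | base => exact le_refl _
    | succ m hm ih => exact le_trans (hfej p hp m) ih
  -- closedness and projections
  have hclosed : IsClosed 𝓕 := by rw [h𝓕]; exact isClosed_eq hFcont continuous_id
  have hproj : ∀ y, ∃ p ∈ 𝓕, infDist y 𝓕 = dist y p :=
    fun y => hclosed.exists_infDist_eq_dist hne y
  obtain ⟨p₀, hp₀⟩ := hne
  set c : ℝ := (1-α)/(α*K^2) with hc_def
  have hc : 0 < c := div_pos hα1' (by positivity)
  set ρ : ℝ := Real.sqrt (1 - c) with hρ_def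
  have hρ0 : 0 ≤ ρ := Real.sqrt_nonneg _
  have hρsq : 1 - c ≤ ρ^2 := by
    rcases le_or_gt 0 (1-c) with h | h
    · rw [Real.sq_sqrt h]
    · have hz : ρ = 0 := Real.sqrt_eq_zero_of_nonpos h.le
      rw [hz]; nlinarith
  have hρsq' : ρ^2 < 1 := by
    rcases le_or_gt 0 (1-c) with h | h
    · rw [Real.sq_sqrt h]; linarith
    · have hz : ρ = 0 := Real.sqrt_eq_zero_of_nonpos h.le
      rw [hz]; norm_num
  have hρ1 : ρ < 1 := by nlinarith
  -- residuals tend to zero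
  have ha_anti : Antitone (fun k => ‖x k - p₀‖) := antitone_nat_of_succ_le (fun k => hfej p₀ hp₀ k)
  have ha_bdd : BddBelow (Set.range fun k => ‖x k - p₀‖) :=
    ⟨0, by rintro y ⟨k, rfl⟩; exact norm_nonneg _⟩
  have ha_tend : Tendsto (fun k => ‖x k - p₀‖) atTop (nhds (⨅ k, ‖x k - p₀‖)) :=
    tendsto_atTop_ciInf ha_anti ha_bdd
  have hdiff : Tendsto (fun k => ‖x k - p₀‖^2 - ‖x (k+1) - p₀‖^2) atTop (nhds 0) := by
    have h1 : Tendsto (fun k => ‖x k - p₀‖^2) atTop (nhds ((⨅ k, ‖x k - p₀‖)^2)) :=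
      ha_tend.pow 2
    have h2 : Tendsto (fun k => ‖x (k+1) - p₀‖^2) atTop (nhds ((⨅ k, ‖x k - p₀‖)^2)) :=
      (tendsto_add_atTop_iff_nat 1).mpr h1
    simpa using h1.sub h2
  have hres : Tendsto (fun k => ‖x (k+1) - x k‖) atTop (nhds 0) := by
    have hb : ∀ k, ‖x (k+1) - x k‖^2 ≤ (α/(1-α)) * (‖x k - p₀‖^2 - ‖x (k+1) - p₀‖^2) := by
      intro k
      have h := havg (x k) p₀ hp₀
      rw [← hx k] at h
      have hpos : (0:ℝ) < α/(1-α) := div_pos hα0 hα1'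
      have h2 : (1-α)/α * ‖x (k+1) - x k‖^2 ≤ ‖x k - p₀‖^2 - ‖x (k+1) - p₀‖^2 := by linarith
      have h3 := mul_le_mul_of_nonneg_left h2 hpos.le
      calc ‖x (k+1) - x k‖^2 = α/(1-α) * ((1-α)/α * ‖x (k+1) - x k‖^2) := by
            field_simp
        _ ≤ α/(1-α) * (‖x k - p₀‖^2 - ‖x (k+1) - p₀‖^2) := h3
    have hsq : Tendsto (fun k => ‖x (k+1) - x k‖^2) atTop (nhds 0) := by
      apply squeeze_zero (fun k => sq_nonneg _) hb
      simpa using hdiff.const_mul (α/(1-α))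
    have := hsq.sqrt
    rw [Real.sqrt_zero] at this
    convert this using 2 with k
    rw [Real.sqrt_sq (norm_nonneg _)]
  -- compactness argument: find k₀ with small distance
  have hball : ∀ k, x k ∈ closedBall p₀ (dist (x 0) p₀) := by
    intro k
    rw [mem_closedBall]
    simpa [dist_eq_norm] using hfej' p₀ hp₀ 0 k (Nat.zero_le k)
  obtain ⟨z, -, φ, hφ, hz⟩ := (isCompact_closedBall p₀ _).tendsto_subseq hball
  have hzfix : z ∈ 𝓕 := by
    rw [h𝓕]
    have h1 : Tendsto (fun j => F (x (φ j))) atTop (nhds (F z)) := (hFcont.tendsto z).comp hz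
    have h2 : Tendsto (fun j => F (x (φ j)) - x (φ j)) atTop (nhds 0) := by
      rw [tendsto_zero_iff_norm_tendsto_zero]
      have h3 := hres.comp hφ.tendsto_atTop
      apply h3.congr
      intro j
      show ‖x (φ j + 1) - x (φ j)‖ = ‖F (x (φ j)) - x (φ j)‖
      rw [hx (φ j)]
    have h4 : Tendsto (fun j => F (x (φ j))) atTop (nhds z) := by
      have h5 := hz.add h2
      rw [add_zero] at h5
      apply h5.congr
      intro j
      show x (φ j) + (F (x (φ j)) - x (φ j)) = F (x (φ j))
      abel
    exact (tendsto_nhds_unique h1 h4)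
  have hdz : Tendsto (fun j => infDist (x (φ j)) 𝓕) atTop (nhds 0) := by
    apply squeeze_zero (fun j => infDist_nonneg) (fun j => infDist_le_dist_of_mem hzfix)
    have := hz.dist (tendsto_const_nhds (x := z))
    simpa using this
  obtain ⟨j₀, hj₀⟩ := (hdz.eventually (eventually_le_nhds hR)).exists
  set k₀ := φ j₀ with hk₀_def
  have hd0 : infDist (x k₀) 𝓕 ≤ R := by simpa using hj₀
  -- monotonicity of infDist along the iteration
  have hdmono : ∀ k, infDist (x (k+1)) 𝓕 ≤ infDist (x k) 𝓕 := by
    intro k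
    obtain ⟨p, hp, hdp⟩ := hproj (x k)
    calc infDist (x (k+1)) 𝓕 ≤ dist (x (k+1)) p := infDist_le_dist_of_mem hp
      _ ≤ dist (x k) p := by simpa [dist_eq_norm] using hfej p hp k
      _ = infDist (x k) 𝓕 := hdp.symm
  have hdanti : Antitone (fun k => infDist (x k) 𝓕) := antitone_nat_of_succ_le hdmono
  have hdR : ∀ k, k₀ ≤ k → infDist (x k) 𝓕 ≤ R := fun k hk => le_trans (hdanti hk) hd0
  -- the lower bound on the residual in terms of the distance
  have hlow : ∀ k, k₀ ≤ k → c * (infDist (x k) 𝓕)^2 ≤ (1-α)/α * ‖x (k+1) - x k‖^2 := by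
    intro k hk
    have hd0' : 0 ≤ infDist (x k) 𝓕 := infDist_nonneg
    have hEBk : infDist (x k) 𝓕 ≤ K * ‖x (k+1) - x k‖ := by
      have := hEB (x k) (hdR k hk); rwa [← hx k] at this
    have hΔ : (infDist (x k) 𝓕)^2 ≤ K^2 * ‖x (k+1) - x k‖^2 := by
      nlinarith [norm_nonneg (x (k+1) - x k)]
    have h1 : c * (infDist (x k) 𝓕)^2 ≤ c * (K^2 * ‖x (k+1) - x k‖^2) :=
      mul_le_mul_of_nonneg_left hΔ hc.le
    have h2 : c * (K^2 * ‖x (k+1) - x k‖^2) = (1-α)/α * ‖x (k+1) - x k‖^2 := by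
      rw [hc_def]; field_simp
    linarith
  -- one-step contraction towards the projection
  have hkey : ∀ k, k₀ ≤ k → ∀ p ∈ 𝓕, infDist (x k) 𝓕 = dist (x k) p →
      ‖x (k+1) - p‖ ≤ ρ * infDist (x k) 𝓕 := by
    intro k hk p hp hdp
    have hd0' : 0 ≤ infDist (x k) 𝓕 := infDist_nonneg
    have h := havg (x k) p hp
    rw [← hx k] at h
    have hdist : ‖x k - p‖ = infDist (x k) 𝓕 := by rw [hdp, dist_eq_norm]
    rw [hdist] at h
    have h2 := hlow k hk
    apply sqle' (norm_nonneg _) (mul_nonneg hρ0 hd0')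
    have h3 : (ρ^2 - (1-c)) * (infDist (x k) 𝓕)^2 ≥ 0 :=
      mul_nonneg (by linarith) (sq_nonneg _)
    nlinarith
  -- linear decay of the distances
  have hdstep : ∀ k, k₀ ≤ k → infDist (x (k+1)) 𝓕 ≤ ρ * infDist (x k) 𝓕 := by
    intro k hk
    obtain ⟨p, hp, hdp⟩ := hproj (x k)
    calc infDist (x (k+1)) 𝓕 ≤ dist (x (k+1)) p := infDist_le_dist_of_mem hp
      _ = ‖x (k+1) - p‖ := dist_eq_norm _ _
      _ ≤ ρ * infDist (x k) 𝓕 := hkey k hk p hp hdp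
  have hgeo : ∀ m, infDist (x (k₀ + m)) 𝓕 ≤ ρ^m * infDist (x k₀) 𝓕 := by
    intro m
    induction m with
    | zero => simp
    | succ m ih =>
      have : k₀ + (m+1) = (k₀ + m) + 1 := rfl
      rw [this]
      calc infDist (x ((k₀+m)+1)) 𝓕 ≤ ρ * infDist (x (k₀ + m)) 𝓕 :=
            hdstep _ (Nat.le_add_right _ _)
        _ ≤ ρ * (ρ^m * infDist (x k₀) 𝓕) := mul_le_mul_of_nonneg_left ih hρ0
        _ = ρ^(m+1) * infDist (x k₀) 𝓕 := by ring
  -- step bound and Cauchy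
  have hstepb : ∀ k, k₀ ≤ k → ‖x (k+1) - x k‖ ≤ 2 * infDist (x k) 𝓕 := by
    intro k hk
    obtain ⟨p, hp, hdp⟩ := hproj (x k)
    have h1 : ‖x (k+1) - p‖ ≤ ρ * infDist (x k) 𝓕 := hkey k hk p hp hdp
    have h2 : ‖x k - p‖ = infDist (x k) 𝓕 := by rw [hdp, dist_eq_norm]
    have h3 : ‖x (k+1) - x k‖ ≤ ‖x (k+1) - p‖ + ‖x k - p‖ := by
      have := norm_sub_le (x (k+1) - p) (x k - p)
      simpa using this
    have hd0' : 0 ≤ infDist (x k) 𝓕 := infDist_nonneg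
    have h4 : ρ * infDist (x k) 𝓕 ≤ 1 * infDist (x k) 𝓕 :=
      mul_le_mul_of_nonneg_right hρ1.le hd0'
    linarith
  have hcau : CauchySeq (fun m => x (m + k₀)) := by
    apply cauchySeq_of_le_geometric ρ (2 * infDist (x k₀) 𝓕) hρ1
    intro m
    have h1 : ‖x ((m + k₀) + 1) - x (m + k₀)‖ ≤ 2 * infDist (x (m + k₀)) 𝓕 :=
      hstepb _ (Nat.le_add_left _ _)
    have h2 : infDist (x (m + k₀)) 𝓕 ≤ ρ^m * infDist (x k₀) 𝓕 := by
      have := hgeo m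
      rwa [Nat.add_comm k₀ m] at this
    rw [dist_eq_norm, norm_sub_rev]
    have he : m + 1 + k₀ = (m + k₀) + 1 := by omega
    rw [he]
    calc ‖x ((m+k₀)+1) - x (m+k₀)‖ ≤ 2 * infDist (x (m + k₀)) 𝓕 := h1
      _ ≤ 2 * (ρ^m * infDist (x k₀) 𝓕) := by linarith
      _ = 2 * infDist (x k₀) 𝓕 * ρ^m := by ring
  obtain ⟨xbar, hxbar⟩ := cauchySeq_tendsto_of_complete hcau
  have htendx : Tendsto x atTop (nhds xbar) := (tendsto_add_atTop_iff_nat k₀).mp hxbar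
  -- the limit is a fixed point
  have hxbar𝓕 : xbar ∈ 𝓕 := by
    rw [h𝓕]
    have h1 : Tendsto (fun k => x (k+1)) atTop (nhds xbar) :=
      (tendsto_add_atTop_iff_nat 1).mpr htendx
    have h2 : Tendsto (fun k => F (x k)) atTop (nhds (F xbar)) :=
      (hFcont.tendsto xbar).comp htendx
    have h3 : Tendsto (fun k => F (x k)) atTop (nhds xbar) := h1.congr (fun k => hx k)
    exact tendsto_nhds_unique h2 h3
  refine ⟨xbar, hxbar𝓕, htendx, k₀, ?_⟩
  intro k hk
  -- limit stays within Fejér ball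
  obtain ⟨p, hp, hdp⟩ := hproj (x k)
  have hd0' : 0 ≤ infDist (x k) 𝓕 := infDist_nonneg
  have hpxbar : ‖xbar - p‖ ≤ ‖x (k+1) - p‖ := by
    have h1 : Tendsto (fun j => ‖x j - p‖) atTop (nhds ‖xbar - p‖) :=
      ((htendx.sub tendsto_const_nhds).norm)
    apply le_of_tendsto h1
    filter_upwards [eventually_ge_atTop (k+1)] with j hj
    exact hfej' p hp (k+1) j hj
  have hkp : ‖x (k+1) - p‖ ≤ ρ * infDist (x k) 𝓕 := hkey k hk p hp hdp
  have hA : ‖x k - xbar‖ ≤ (1 + ρ) * infDist (x k) 𝓕 := by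
    have h1 : ‖x k - xbar‖ ≤ ‖x k - p‖ + ‖xbar - p‖ := by
      have := norm_sub_le (x k - p) (xbar - p)
      simpa using this
    have h2 : ‖x k - p‖ = infDist (x k) 𝓕 := by rw [hdp, dist_eq_norm]
    nlinarith
  have h1 := havg (x k) xbar hxbar𝓕
  rw [← hx k] at h1
  have h2 := hlow k hk
  -- polynomial facts
  have hpoly : (1+ρ)^2*(1-ρ) ≤ 2 := by nlinarith
  have harg : 0 ≤ 1 - (1 + ρ)/2 * (1 - ρ)^2 := by nlinarith
  have hrhosq : (Real.sqrt (1 - (1 + ρ)/2 * (1 - ρ)^2))^2 = 1 - (1 + ρ)/2 * (1 - ρ)^2 :=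
    Real.sq_sqrt harg
  have hgoal2 : ‖x (k+1) - xbar‖^2 ≤ (1 - (1 + ρ)/2 * (1 - ρ)^2) * ‖x k - xbar‖^2 := by
    have hA2 : ‖x k - xbar‖^2 ≤ (1+ρ)^2 * (infDist (x k) 𝓕)^2 := by
      nlinarith [norm_nonneg (x k - xbar)]
    have hcge : 1 - ρ^2 ≤ c := by linarith
    have h5 : (1+ρ)*(1-ρ)^2/2 * ‖x k - xbar‖^2 ≤
        (1+ρ)*(1-ρ)^2/2 * ((1+ρ)^2 * (infDist (x k) 𝓕)^2) := by
      apply mul_le_mul_of_nonneg_left hA2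
      nlinarith
    have h6 : (1+ρ)*(1-ρ)^2/2 * ((1+ρ)^2 * (infDist (x k) 𝓕)^2) ≤
        (1 - ρ^2) * (infDist (x k) 𝓕)^2 := by
      have hfac : 0 ≤ (1+ρ)*(1-ρ)/2 * (infDist (x k) 𝓕)^2 := by
        apply mul_nonneg _ (sq_nonneg _)
        nlinarith
      nlinarith [mul_le_mul_of_nonneg_right hpoly hfac]
    have h7 : (1 - ρ^2) * (infDist (x k) 𝓕)^2 ≤ c * (infDist (x k) 𝓕)^2 :=
      mul_le_mul_of_nonneg_right hcge (sq_nonneg _)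
    nlinarith
  apply sqle' (norm_nonneg _) (mul_nonneg (Real.sqrt_nonneg _) (norm_nonneg _))
  calc ‖x (k+1) - xbar‖^2 ≤ (1 - (1 + ρ)/2 * (1 - ρ)^2) * ‖x k - xbar‖^2 := hgoal2
    _ = (Real.sqrt (1 - (1 + ρ)/2 * (1 - ρ)^2))^2 * ‖x k - xbar‖^2 := by rw [hrhosq]
    _ = (Real.sqrt (1 - (1 + ρ)/2 * (1 - ρ)^2) * ‖x k - xbar‖)^2 := by ring
end

section
/- Fix θ ∈ (0,π), let N_θ : ℝ² → ℝ² be rotation by angle θ, and let F_θ(x) = ½(x + N_θ(x)). Then 0 is the unique fixed point of F_θ, and for all x ≠ 0, ‖F_θ(x)‖ = cos(θ/2)·‖x‖ and ‖F_θ(x) - x‖ = sin(θ/2)·‖x‖. Consequently the tightest error-bound constant is K = 1/sin(θ/2), the tightest rate is ρ = cos(θ/2), and ρ = √(1 - 1/K²). -/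
open Metric Real

theorem stmt_6 (θ : ℝ) (hθ : θ ∈ Set.Ioo 0 Real.pi)
    (N F : EuclideanSpace ℝ (Fin 2) → EuclideanSpace ℝ (Fin 2))
    (hN : ∀ x : EuclideanSpace ℝ (Fin 2),
      N x 0 = Real.cos θ * x 0 - Real.sin θ * x 1 ∧
      N x 1 = Real.sin θ * x 0 + Real.cos θ * x 1)
    (hF : ∀ x, F x = (1 / 2 : ℝ) • (x + N x)) :
    {x | F x = x} = {0} ∧
    (∀ x : EuclideanSpace ℝ (Fin 2), x ≠ 0 →
      ‖F x‖ = Real.cos (θ / 2) * ‖x‖ ∧ ‖F x - x‖ = Real.sin (θ / 2) * ‖x‖) ∧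
    sSup {r : ℝ | ∃ x : EuclideanSpace ℝ (Fin 2), x ≠ 0 ∧ r = ‖x‖ / ‖F x - x‖}
      = 1 / Real.sin (θ / 2) ∧
    sSup {r : ℝ | ∃ x : EuclideanSpace ℝ (Fin 2), x ≠ 0 ∧ r = ‖F x‖ / ‖x‖}
      = Real.cos (θ / 2) ∧
    Real.cos (θ / 2) = Real.sqrt (1 - 1 / (1 / Real.sin (θ / 2)) ^ 2) := by
  obtain ⟨hθ0, hθπ⟩ := hθ
  have hhalf0 : 0 < θ / 2 := by linarith
  have hhalfπ : θ / 2 < π / 2 := by linarith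
  have hs : 0 < Real.sin (θ / 2) := Real.sin_pos_of_pos_of_lt_pi hhalf0 (by linarith [Real.pi_pos])
  have hc : 0 < Real.cos (θ / 2) := Real.cos_pos_of_mem_Ioo ⟨by linarith [Real.pi_pos], hhalfπ⟩
  have hpyth : Real.sin θ ^ 2 + Real.cos θ ^ 2 = 1 := Real.sin_sq_add_cos_sq θ
  have hcos2 : Real.cos (θ / 2) ^ 2 = 1 / 2 + Real.cos θ / 2 := by
    have := Real.cos_sq (θ / 2)
    rw [show 2 * (θ / 2) = θ by ring] at this
    exact this
  have hsin2 : Real.sin (θ / 2) ^ 2 = 1 / 2 - Real.cos θ / 2 := by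
    have h := Real.sin_sq_add_cos_sq (θ / 2)
    linarith [hcos2]
  -- key norm computations
  have key : ∀ x : EuclideanSpace ℝ (Fin 2),
      ‖F x‖ = Real.cos (θ / 2) * ‖x‖ ∧ ‖F x - x‖ = Real.sin (θ / 2) * ‖x‖ := by
    intro x
    obtain ⟨h0, h1⟩ := hN x
    have hF0 : F x 0 = (1 / 2 : ℝ) * (x 0 + N x 0) := by
      rw [hF]; simp [PiLp.smul_apply, PiLp.add_apply]; ring
    have hF1 : F x 1 = (1 / 2 : ℝ) * (x 1 + N x 1) := by
      rw [hF]; simp [PiLp.smul_apply, PiLp.add_apply]; ring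
    have hnx : ‖x‖ = Real.sqrt (x 0 ^ 2 + x 1 ^ 2) := by
      rw [EuclideanSpace.norm_eq, Fin.sum_univ_two]
      simp [sq_abs]
    have hnF : ‖F x‖ = Real.sqrt (F x 0 ^ 2 + F x 1 ^ 2) := by
      rw [EuclideanSpace.norm_eq, Fin.sum_univ_two]
      simp [sq_abs]
    have hnFx : ‖F x - x‖ = Real.sqrt ((F x 0 - x 0) ^ 2 + (F x 1 - x 1) ^ 2) := by
      rw [EuclideanSpace.norm_eq, Fin.sum_univ_two]
      simp [sq_abs, PiLp.sub_apply]
    constructor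
    · rw [hnF, hnx, hF0, hF1, h0, h1]
      rw [show Real.cos (θ/2) = Real.sqrt (Real.cos (θ/2) ^ 2) from
        (Real.sqrt_sq hc.le).symm, ← Real.sqrt_mul (sq_nonneg _)]
      congr 1
      linear_combination (-(x 0 ^ 2 + x 1 ^ 2)) * hcos2 + (x 0 ^ 2 + x 1 ^ 2) / 4 * hpyth
    · rw [hnFx, hnx, hF0, hF1, h0, h1]
      rw [show Real.sin (θ/2) = Real.sqrt (Real.sin (θ/2) ^ 2) from
        (Real.sqrt_sq hs.le).symm, ← Real.sqrt_mul (sq_nonneg _)]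
      congr 1
      linear_combination (-(x 0 ^ 2 + x 1 ^ 2)) * hsin2 + (x 0 ^ 2 + x 1 ^ 2) / 4 * hpyth
  refine ⟨?_, fun x _ => key x, ?_, ?_, ?_⟩
  · ext x
    simp only [Set.mem_setOf_eq, Set.mem_singleton_iff]
    constructor
    · intro hx
      have h2 := (key x).2
      rw [hx, sub_self, norm_zero] at h2
      rcases mul_eq_zero.mp h2.symm with h | h
      · exact absurd h hs.ne'
      · exact norm_eq_zero.mp h
    · rintro rfl
      have h2 := (key 0).2
      rw [sub_zero, norm_zero, mul_zero] at h2
      exact norm_eq_zero.mp h2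
  · have hset : {r : ℝ | ∃ x : EuclideanSpace ℝ (Fin 2), x ≠ 0 ∧ r = ‖x‖ / ‖F x - x‖}
        = {1 / Real.sin (θ / 2)} := by
      ext r
      simp only [Set.mem_setOf_eq, Set.mem_singleton_iff]
      constructor
      · rintro ⟨x, hx, rfl⟩
        rw [(key x).2]
        have hxn : ‖x‖ ≠ 0 := norm_ne_zero_iff.mpr hx
        field_simp
      · rintro rfl
        refine ⟨EuclideanSpace.single 0 1, ?_, ?_⟩
        · intro h
          have := congrArg (fun v => v 0) h
          simp [EuclideanSpace.single_apply] at this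
        · rw [(key _).2, EuclideanSpace.norm_single]
          simp
    rw [hset, csSup_singleton]
  · have hset : {r : ℝ | ∃ x : EuclideanSpace ℝ (Fin 2), x ≠ 0 ∧ r = ‖F x‖ / ‖x‖}
        = {Real.cos (θ / 2)} := by
      ext r
      simp only [Set.mem_setOf_eq, Set.mem_singleton_iff]
      constructor
      · rintro ⟨x, hx, rfl⟩
        rw [(key x).1]
        have hxn : ‖x‖ ≠ 0 := norm_ne_zero_iff.mpr hx
        field_simp
      · rintro rfl
        refine ⟨EuclideanSpace.single 0 1, ?_, ?_⟩
        · intro h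
          have := congrArg (fun v => v 0) h
          simp [EuclideanSpace.single_apply] at this
        · rw [(key _).1, EuclideanSpace.norm_single]
          simp
    rw [hset, csSup_singleton]
  · have h := Real.sin_sq_add_cos_sq (θ / 2)
    rw [show (1 : ℝ) - 1 / (1 / Real.sin (θ / 2)) ^ 2 = Real.cos (θ / 2) ^ 2 by
      field_simp
      linarith]
    exact (Real.sqrt_sq hc.le).symm
end

section
/- Let (F₁,P₁),…,(F_k,P_k) be a compatible collection: P₁,…,P_k are nonempty polyhedra with ℝⁿ = P₁ ∪ ⋯ ∪ P_k, each F_j : ℝⁿ → ℝⁿ is affine, and F_i(x) = F_j(x) for x ∈ P_i ∩ P_j. Let F be the piecewise linear operator equal to F_j on P_j, and assume the fixed-point set 𝓕 of F is nonempty. Then there exists R > 0 such that for all x with dist(x, 𝓕) ≤ R, dist(x, 𝓕) ≤ K·‖F(x) - x‖, where K = max over those j with P_j ∩ 𝓕 ≠ ∅ of the Hoffman constant H(I - F_j | P_j). -/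
open Set
set_option linter.unusedSectionVars false


open Metric

/-- A polyhedron: finite intersection of closed half-spaces. -/
def IsPolyhedron {n : ℕ} (P : Set (EuclideanSpace ℝ (Fin n))) : Prop :=
  ∃ (m : ℕ) (A : Matrix (Fin m) (Fin n) ℝ) (b : Fin m → ℝ),
    P = {x | ∀ i, Matrix.toEuclideanLin A x i ≤ b i}

/-- Relative Hoffman constant of an operator `G` relative to a set `P`. -/
noncomputable def hoffmanConst {n : ℕ}
    (G : EuclideanSpace ℝ (Fin n) → EuclideanSpace ℝ (Fin n))
    (P : Set (EuclideanSpace ℝ (Fin n))) : ℝ :=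
  sSup ((fun x => infDist x ({y | G y = 0} ∩ P) / ‖G x‖) '' (P \ {y | G y = 0}))


section Cone
variable {E : Type*} [NormedAddCommGroup E] [InnerProductSpace ℝ E] [FiniteDimensional ℝ E]

open scoped RealInnerProductSpace

theorem cone_carath {ι : Type*} (a : ι → E) (s : Finset ι) :
    ∀ lam : ι → ℝ, (∀ i ∈ s, 0 ≤ lam i) →
    ∃ (t : Finset ι) (mu : ι → ℝ), t ⊆ s ∧ (∀ i ∈ t, 0 ≤ mu i) ∧
      (∑ i ∈ t, mu i • a i = ∑ i ∈ s, lam i • a i) ∧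
      LinearIndependent ℝ (fun i : t => a i) := by
  classical
  induction s using Finset.strongInduction with
  | _ s IH =>
    intro lam hlam
    by_cases hind : LinearIndependent ℝ (fun i : s => a i)
    · exact ⟨s, lam, subset_rfl, hlam, rfl, hind⟩
    · obtain ⟨g, hg0, i₁, hi₁⟩ := Fintype.not_linearIndependent_iff.1 hind
      -- turn g into c : ι → ℝ with ∑ over s equal zero and some positive entry
      have key : ∃ c : ι → ℝ, (∑ i ∈ s, c i • a i = 0) ∧ ∃ i ∈ s, 0 < c i := by
        by_cases hpos : 0 < g i₁
        · refine ⟨fun i => if h : i ∈ s then g ⟨i, h⟩ else 0, ?_, ⟨i₁, i₁.2, by simp [hpos]⟩⟩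
          rw [← Finset.sum_coe_sort s]
          simpa using hg0
        · refine ⟨fun i => if h : i ∈ s then -g ⟨i, h⟩ else 0, ?_, ⟨i₁, i₁.2, ?_⟩⟩
          · rw [← Finset.sum_coe_sort s]
            simp only [Subtype.coe_eta, dif_pos (Subtype.coe_prop _), neg_smul]
            · simpa using hg0
          · simp only [dif_pos (Subtype.coe_prop _)]
            push_neg at hpos
            simpa using lt_of_le_of_ne hpos hi₁
      obtain ⟨c, hcsum, hcpos⟩ := key
      set T : Finset ι := s.filter (fun i => 0 < c i) with hT
      have hTne : T.Nonempty := by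
        obtain ⟨i, his, hci⟩ := hcpos
        exact ⟨i, Finset.mem_filter.2 ⟨his, hci⟩⟩
      obtain ⟨i₀, hi₀T, hτ⟩ := Finset.exists_mem_eq_inf' hTne (fun i => lam i / c i)
      set τ := T.inf' hTne (fun i => lam i / c i) with hτdef
      have hi₀s : i₀ ∈ s := (Finset.mem_filter.1 hi₀T).1
      have hci₀ : 0 < c i₀ := (Finset.mem_filter.1 hi₀T).2
      have hτ0 : 0 ≤ τ := by
        rw [hτ]
        exact div_nonneg (hlam i₀ hi₀s) hci₀.le
      set lam' : ι → ℝ := fun i => lam i - τ * c i with hlam'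
      have hlam'0 : ∀ i ∈ s, 0 ≤ lam' i := by
        intro i his
        by_cases hci : 0 < c i
        · have hiT : i ∈ T := Finset.mem_filter.2 ⟨his, hci⟩
          have : τ ≤ lam i / c i := Finset.inf'_le _ hiT
          have := (le_div_iff₀ hci).1 this
          simp only [hlam']; linarith
        · push_neg at hci
          have : τ * c i ≤ 0 := mul_nonpos_of_nonneg_of_nonpos hτ0 hci
          have := hlam i his
          simp only [hlam']; linarith
      have hlam'i₀ : lam' i₀ = 0 := by
        simp only [hlam', hτ]
        field_simp
        ring
      have hsum' : ∑ i ∈ s, lam' i • a i = ∑ i ∈ s, lam i • a i := by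
        simp only [hlam', sub_smul, mul_smul, Finset.sum_sub_distrib, ← Finset.smul_sum, hcsum,
          smul_zero, sub_zero]
      have hsum'' : ∑ i ∈ s.erase i₀, lam' i • a i = ∑ i ∈ s, lam i • a i := by
        rw [← hsum']
        exact Finset.sum_erase _ (by rw [hlam'i₀, zero_smul])
      obtain ⟨t, mu, hts, hmu, hmusum, hmind⟩ :=
        IH (s.erase i₀) (Finset.erase_ssubset hi₀s) lam' (fun i hi => hlam'0 i (Finset.mem_of_mem_erase hi))
      exact ⟨t, mu, hts.trans (Finset.erase_subset _ _), hmu, by rw [hmusum, hsum''], hmind⟩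



theorem indep_bound {ι : Type*} (a : ι → E) (t : Finset ι)
    (ht : LinearIndependent ℝ (fun i : t => a i)) :
    ∃ c ≥ 0, ∀ mu : ι → ℝ, (∀ i ∈ t, 0 ≤ mu i) →
      ∑ i ∈ t, mu i ≤ c * ‖∑ i ∈ t, mu i • a i‖ := by
  classical
  rcases t.eq_empty_or_nonempty with rfl | htne
  · exact ⟨0, le_rfl, fun mu _ => by simp⟩
  set Δ : Set (↥t → ℝ) := {g | (∀ i, 0 ≤ g i) ∧ ∑ i, g i = 1} with hΔ
  have hΔclosed : IsClosed Δ := by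
    have h1 : IsClosed {g : ↥t → ℝ | ∀ i, 0 ≤ g i} := by
      have : {g : ↥t → ℝ | ∀ i, 0 ≤ g i} = ⋂ i, {g | 0 ≤ g i} := by ext; simp
      rw [this]
      exact isClosed_iInter fun i => isClosed_le continuous_const (continuous_apply i)
    have h2 : IsClosed {g : ↥t → ℝ | ∑ i, g i = 1} :=
      isClosed_eq (by continuity) continuous_const
    exact h1.inter h2
  have hΔbdd : Bornology.IsBounded Δ := by
    apply Bornology.IsBounded.subset (Metric.isBounded_closedBall (x := (0 : ↥t → ℝ)) (r := 1))
    intro g hg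
    rw [Metric.mem_closedBall, dist_zero_right]
    refine (pi_norm_le_iff_of_nonneg zero_le_one).2 fun i => ?_
    rw [Real.norm_eq_abs, abs_of_nonneg (hg.1 i)]
    calc g i ≤ ∑ j, g j := Finset.single_le_sum (fun j _ => hg.1 j) (Finset.mem_univ i)
    _ = 1 := hg.2
  have hΔcompact : IsCompact Δ := isCompact_of_isClosed_isBounded hΔclosed hΔbdd
  have hΔne : Δ.Nonempty := by
    refine ⟨fun _ => (t.card : ℝ)⁻¹, fun i => by positivity, ?_⟩
    rw [Finset.sum_const, Finset.card_univ, Fintype.card_coe, nsmul_eq_mul]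
    field_simp [Finset.card_ne_zero_of_mem htne.choose_spec]
  have hcont : Continuous fun g : ↥t → ℝ => ‖∑ i, g i • a i‖ := by
    apply Continuous.norm
    exact continuous_finset_sum _ fun i _ => (continuous_apply i).smul continuous_const
  obtain ⟨g₀, hg₀Δ, hg₀min⟩ := hΔcompact.exists_isMinOn hΔne hcont.continuousOn
  set m := ‖∑ i, g₀ i • a i‖ with hm
  have hmpos : 0 < m := by
    rcases (norm_nonneg (∑ i : ↥t, g₀ i • a i.1)).lt_or_eq with h | h
    · exact h
    · exfalso
      have hz : ∑ i, g₀ i • a i = 0 := norm_eq_zero.1 h.symm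
      have := Fintype.linearIndependent_iff.1 ht g₀ hz
      have : ∑ i : ↥t, g₀ i = 0 := Finset.sum_eq_zero fun i _ => this i
      rw [hg₀Δ.2] at this; norm_num at this
  refine ⟨m⁻¹, by positivity, fun mu hmu => ?_⟩
  set S := ∑ i ∈ t, mu i with hS
  have hS0 : 0 ≤ S := Finset.sum_nonneg hmu
  rcases eq_or_lt_of_le hS0 with h | h
  · have hall : ∀ i ∈ t, mu i = 0 :=
      (Finset.sum_eq_zero_iff_of_nonneg hmu).1 h.symm
    have hz : ∑ i ∈ t, mu i • a i = 0 :=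
      Finset.sum_eq_zero fun i hi => by rw [hall i hi, zero_smul]
    rw [hz, norm_zero, mul_zero]
    exact h.ge
  · -- normalize
    set g : ↥t → ℝ := fun i => mu i / S with hg
    have hgΔ : g ∈ Δ := by
      constructor
      · intro i; exact div_nonneg (hmu i i.2) hS0
      · rw [← Finset.sum_div, Finset.sum_coe_sort t mu, ← hS, div_self h.ne']
    have hsumeq : ∑ i : ↥t, g i • a i = S⁻¹ • ∑ i ∈ t, mu i • a i := by
      rw [← Finset.sum_coe_sort t (fun i => mu i • a i), Finset.smul_sum]
      refine Finset.sum_congr rfl fun i _ => ?_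
      rw [hg]
      simp only
      rw [div_eq_inv_mul, mul_smul]
    have hmle : m ≤ ‖∑ i : ↥t, g i • a i‖ := hg₀min hgΔ
    rw [hsumeq, norm_smul, Real.norm_eq_abs, abs_of_nonneg (by positivity)] at hmle
    have hN : S * m ≤ ‖∑ i ∈ t, mu i • a i‖ := by
      have h2 := mul_le_mul_of_nonneg_left hmle hS0
      rwa [← mul_assoc, mul_inv_cancel₀ h.ne', one_mul] at h2
    rw [le_inv_mul_iff₀ hmpos, mul_comm]
    exact hN

/-- The cone generated by `a i`, `i ∈ s`. -/
def coneOf {ι : Type*} (a : ι → E) (s : Finset ι) : Set E :=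
  {y | ∃ lam : ι → ℝ, (∀ i ∈ s, 0 ≤ lam i) ∧ y = ∑ i ∈ s, lam i • a i}

theorem coneOf_zero_mem {ι : Type*} (a : ι → E) (s : Finset ι) : (0 : E) ∈ coneOf a s :=
  ⟨fun _ => 0, fun _ _ => le_rfl, by simp⟩

theorem coneOf_smul_mem {ι : Type*} (a : ι → E) (s : Finset ι) {i : ι} (hi : i ∈ s) {τ : ℝ}
    (hτ : 0 ≤ τ) : τ • a i ∈ coneOf a s := by
  classical
  refine ⟨fun j => if j = i then τ else 0, fun j _ => by dsimp only; split <;> simp [hτ], ?_⟩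
  rw [Finset.sum_eq_single i (fun j _ hj => by simp [hj]) (fun h => absurd hi h)]
  simp

theorem coneOf_convex {ι : Type*} (a : ι → E) (s : Finset ι) : Convex ℝ (coneOf a s) := by
  rintro x ⟨lam, hlam, rfl⟩ y ⟨nu, hnu, rfl⟩ α β hα hβ hαβ
  refine ⟨fun i => α * lam i + β * nu i,
    fun i hi => add_nonneg (mul_nonneg hα (hlam i hi)) (mul_nonneg hβ (hnu i hi)), ?_⟩
  simp only [add_smul, mul_smul, Finset.sum_add_distrib, Finset.smul_sum]

theorem coneOf_isClosed {ι : Type*} (a : ι → E) (s : Finset ι) : IsClosed (coneOf a s) := by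
  classical
  have hdecomp : coneOf a s =
      ⋃ t ∈ (s.powerset.filter fun t : Finset ι =>
        LinearIndependent ℝ (fun i : ↥t => a i)), coneOf a t := by
    ext y
    simp only [Set.mem_iUnion, Finset.mem_filter, Finset.mem_powerset, exists_prop]
    constructor
    · rintro ⟨lam, hlam, rfl⟩
      obtain ⟨t, mu, hts, hmu, hsum, hind⟩ := cone_carath a s lam hlam
      exact ⟨t, ⟨hts, hind⟩, mu, hmu, hsum.symm⟩
    · rintro ⟨t, ⟨hts, -⟩, lam, hlam, rfl⟩
      refine ⟨fun i => if i ∈ t then lam i else 0,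
        fun i _ => by dsimp only; split <;> simp [hlam, *], ?_⟩
      have h1 : ∑ i ∈ s, (if i ∈ t then lam i else 0) • a i
          = ∑ i ∈ s, (if i ∈ t then lam i • a i else 0) :=
        Finset.sum_congr rfl fun i _ => by split <;> simp
      rw [h1, Finset.sum_ite_mem, Finset.inter_eq_right.2 hts]
  rw [hdecomp]
  apply Set.Finite.isClosed_biUnion (Finset.finite_toSet _)
  rintro t ht
  rw [Finset.mem_coe, Finset.mem_filter] at ht
  obtain ⟨-, hind⟩ := ht
  set Φ : (↥t → ℝ) →ₗ[ℝ] E := Fintype.linearCombination ℝ (fun i : ↥t => a i) with hΦ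
  have hker : LinearMap.ker Φ = ⊥ := by
    rw [LinearMap.ker_eq_bot']
    intro g hg
    rw [hΦ, Fintype.linearCombination_apply] at hg
    exact funext (Fintype.linearIndependent_iff.1 hind g hg)
  have hemb := LinearMap.isClosedEmbedding_of_injective hker
  have horth : IsClosed {g : ↥t → ℝ | ∀ i, 0 ≤ g i} := by
    have : {g : ↥t → ℝ | ∀ i, 0 ≤ g i} = ⋂ i, {g | 0 ≤ g i} := by ext; simp
    rw [this]
    exact isClosed_iInter fun i => isClosed_le continuous_const (continuous_apply i)
  have himg : coneOf a t = Φ '' {g : ↥t → ℝ | ∀ i, 0 ≤ g i} := by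
    ext y
    constructor
    · rintro ⟨lam, hlam, rfl⟩
      refine ⟨fun i => lam i, fun i => hlam i i.2, ?_⟩
      rw [hΦ, Fintype.linearCombination_apply, Finset.sum_coe_sort t (fun i => lam i • a i)]
    · rintro ⟨g, hg, rfl⟩
      refine ⟨fun i => if h : i ∈ t then g ⟨i, h⟩ else 0,
        fun i hi => by simp only [dif_pos hi]; exact hg ⟨i, hi⟩, ?_⟩
      rw [hΦ, Fintype.linearCombination_apply, ← Finset.sum_coe_sort t]
      exact (Finset.sum_congr rfl fun i _ => by simp [dif_pos i.2]).symm
  rw [himg]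
  exact hemb.isClosedMap _ horth

theorem farkas {ι : Type*} (a : ι → E) (s : Finset ι) (d : E) (hd : d ∉ coneOf a s) :
    ∃ y : E, (∀ i ∈ s, ⟪a i, y⟫ ≤ 0) ∧ 0 < ⟪d, y⟫ := by
  obtain ⟨f, u, hfu, hud⟩ :=
    geometric_hahn_banach_closed_point (coneOf_convex a s) (coneOf_isClosed a s) hd
  have hu0 : 0 < u := by
    have := hfu 0 (coneOf_zero_mem a s)
    rwa [map_zero] at this
  have hfa : ∀ i ∈ s, f (a i) ≤ 0 := by
    intro i hi
    by_contra h
    push_neg at h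
    have hτ : (0:ℝ) ≤ (u + 1) / f (a i) := by positivity
    have := hfu _ (coneOf_smul_mem a s hi hτ)
    rw [map_smul, smul_eq_mul, div_mul_cancel₀ _ h.ne'] at this
    linarith
  refine ⟨(InnerProductSpace.toDual ℝ E).symm f, fun i hi => ?_, ?_⟩
  · rw [real_inner_comm, InnerProductSpace.toDual_symm_apply]
    exact hfa i hi
  · rw [real_inner_comm, InnerProductSpace.toDual_symm_apply]
    linarith

theorem hoffman_core {ι : Type*} [Fintype ι] (a : ι → E) (b : ι → ℝ)
    (hQ : {x : E | ∀ i, ⟪a i, x⟫ ≤ b i}.Nonempty) :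
    ∃ C ≥ 0, ∀ x r, 0 ≤ r → (∀ i, ⟪a i, x⟫ ≤ b i + r) →
      infDist x {x : E | ∀ i, ⟪a i, x⟫ ≤ b i} ≤ C * r := by
  classical
  set Q : Set E := {x : E | ∀ i, ⟪a i, x⟫ ≤ b i} with hQdef
  have hQconv : Convex ℝ Q := by
    intro x hx y hy α β hα hβ hαβ
    intro i
    have := hx i; have := hy i
    calc ⟪a i, α • x + β • y⟫ = α * ⟪a i, x⟫ + β * ⟪a i, y⟫ := by
          rw [inner_add_right, real_inner_smul_right, real_inner_smul_right]
    _ ≤ α * b i + β * b i := by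
          apply add_le_add <;> apply mul_le_mul_of_nonneg_left <;> first | exact hx i | exact hy i | assumption
    _ = b i := by rw [← add_mul, hαβ, one_mul]
  have hQclosed : IsClosed Q := by
    have : Q = ⋂ i, {x : E | ⟪a i, x⟫ ≤ b i} := by ext; simp [hQdef]
    rw [this]
    exact isClosed_iInter fun i =>
      isClosed_le (Continuous.inner continuous_const continuous_id) continuous_const
  -- uniform constant over independent subsets
  have H : ∀ t : Finset ι, ∃ c, 0 ≤ c ∧ (LinearIndependent ℝ (fun i : ↥t => a i) →
      ∀ mu : ι → ℝ, (∀ i ∈ t, 0 ≤ mu i) → ∑ i ∈ t, mu i ≤ c * ‖∑ i ∈ t, mu i • a i‖) := by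
    intro t
    by_cases hind : LinearIndependent ℝ (fun i : ↥t => a i)
    · obtain ⟨c, hc0, hc⟩ := indep_bound a t hind
      exact ⟨c, hc0, fun _ => hc⟩
    · exact ⟨0, le_rfl, fun h => absurd h hind⟩
  choose c hc0 hc using H
  set C : ℝ := ∑ t : Finset ι, c t with hC
  have hC0 : 0 ≤ C := Finset.sum_nonneg fun t _ => hc0 t
  have hCt : ∀ t : Finset ι, c t ≤ C :=
    fun t => Finset.single_le_sum (fun t _ => hc0 t) (Finset.mem_univ t)
  refine ⟨C, hC0, fun x r hr hres => ?_⟩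
  by_cases hx : x ∈ Q
  · rw [infDist_zero_of_mem hx]
    positivity
  -- projection
  obtain ⟨p, hpQ, hpmin⟩ := exists_norm_eq_iInf_of_complete_convex hQ
    (hQclosed.isComplete) hQconv x
  have hvar : ∀ w ∈ Q, ⟪x - p, w - p⟫ ≤ 0 :=
    (norm_eq_iInf_iff_real_inner_le_zero hQconv hpQ).1 hpmin
  set d : E := x - p with hd
  have hdne : d ≠ 0 := by
    rw [hd, sub_ne_zero]
    rintro rfl
    exact hx hpQ
  set I : Finset ι := Finset.univ.filter (fun i => ⟪a i, p⟫ = b i) with hI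
  -- x - p lies in the cone of active constraints
  have hdcone : d ∈ coneOf a I := by
    by_contra hdc
    obtain ⟨y, hy, hdy⟩ := farkas a I d hdc
    have hev : ∀ᶠ τ in nhdsWithin (0:ℝ) (Set.Ioi 0), ∀ i, ⟪a i, p + τ • y⟫ ≤ b i := by
      rw [Filter.eventually_all]
      intro i
      by_cases hiI : i ∈ I
      · filter_upwards [eventually_mem_nhdsWithin] with τ (hτ : τ ∈ Set.Ioi 0)
        have : ⟪a i, p⟫ = b i := (Finset.mem_filter.1 hiI).2
        rw [inner_add_right, real_inner_smul_right, this]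
        nlinarith [hy i hiI, le_of_lt (Set.mem_Ioi.1 hτ)]
      · have hlt : ⟪a i, p⟫ < b i :=
          lt_of_le_of_ne (hpQ i) (fun h => hiI (Finset.mem_filter.2 ⟨Finset.mem_univ i, h⟩))
        have htend : Filter.Tendsto (fun τ : ℝ => ⟪a i, p + τ • y⟫) (nhds 0) (nhds ⟪a i, p⟫) := by
          have : Continuous (fun τ : ℝ => ⟪a i, p + τ • y⟫) := by
            apply Continuous.inner continuous_const
            exact continuous_const.add (continuous_id.smul continuous_const)
          have h0 := this.tendsto 0
          simpa using h0
        have := (htend.eventually_lt_const hlt).filter_mono (nhdsWithin_le_nhds (s := Set.Ioi (0:ℝ)))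
        filter_upwards [this] with τ hτ using hτ.le
    obtain ⟨τ, hτQ, hτpos⟩ := (hev.and eventually_mem_nhdsWithin).exists
    have hmem : p + τ • y ∈ Q := hτQ
    have := hvar _ hmem
    rw [add_sub_cancel_left, real_inner_smul_right] at this
    nlinarith [Set.mem_Ioi.1 hτpos]
  obtain ⟨lam, hlam, hdeq⟩ := hdcone
  obtain ⟨t, mu, htI, hmu, hsum, hind⟩ := cone_carath a I lam hlam
  rw [← hdeq] at hsum
  -- main estimate
  have hinner : ⟪d, d⟫ ≤ (∑ i ∈ t, mu i) * r := by
    calc ⟪d, d⟫ = ∑ i ∈ t, mu i * ⟪a i, d⟫ := by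
          rw [← hsum]
          rw [sum_inner]
          exact Finset.sum_congr rfl fun i _ => real_inner_smul_left _ _ _
    _ ≤ ∑ i ∈ t, mu i * r := by
          apply Finset.sum_le_sum
          intro i hi
          apply mul_le_mul_of_nonneg_left _ (hmu i hi)
          have hact : ⟪a i, p⟫ = b i := (Finset.mem_filter.1 (htI hi)).2
          have : ⟪a i, d⟫ = ⟪a i, x⟫ - ⟪a i, p⟫ := by rw [hd, inner_sub_right]
          rw [this, hact]
          linarith [hres i]
    _ = (∑ i ∈ t, mu i) * r := (Finset.sum_mul _ _ _).symm
  have hnormd : 0 < ‖d‖ := norm_pos_iff.2 hdne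
  have hmusum : ∑ i ∈ t, mu i ≤ c t * ‖d‖ := by
    have := hc t hind mu hmu
    rwa [hsum] at this
  have hd2 : ‖d‖ ^ 2 ≤ c t * ‖d‖ * r := by
    rw [← real_inner_self_eq_norm_sq]
    calc ⟪d, d⟫ ≤ (∑ i ∈ t, mu i) * r := hinner
    _ ≤ c t * ‖d‖ * r := mul_le_mul_of_nonneg_right hmusum hr
  have hdle : ‖d‖ ≤ c t * r := by
    have h2 : ‖d‖ * ‖d‖ ≤ (c t * r) * ‖d‖ := by nlinarith
    exact le_of_mul_le_mul_right h2 hnormd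
  calc infDist x Q ≤ dist x p := infDist_le_dist_of_mem hpQ
  _ = ‖d‖ := by rw [dist_eq_norm, hd]
  _ ≤ c t * r := hdle
  _ ≤ C * r := mul_le_mul_of_nonneg_right (hCt t) hr

theorem sys_closed {ι : Type*} (a : ι → E) (b : ι → ℝ) :
    IsClosed {x : E | ∀ i, ⟪a i, x⟫ ≤ b i} := by
  have : {x : E | ∀ i, ⟪a i, x⟫ ≤ b i} = ⋂ i, {x : E | ⟪a i, x⟫ ≤ b i} := by ext; simp
  rw [this]
  exact isClosed_iInter fun i =>
    isClosed_le (Continuous.inner continuous_const continuous_id) continuous_const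

theorem rep_inter_affine {ι : Type} [Fintype ι] (a : ι → E) (b : ι → ℝ) (G : E →ᵃ[ℝ] E) :
    ∃ (κ : Type) (_ : Fintype κ) (a' : κ → E) (b' : κ → ℝ),
      ({x | G x = 0} ∩ {x | ∀ i, ⟪a i, x⟫ ≤ b i} = {x | ∀ i', ⟪a' i', x⟫ ≤ b' i'}) ∧
      (∀ x, (∀ i, ⟪a i, x⟫ ≤ b i) → ∀ i', ⟪a' i', x⟫ ≤ b' i' + ‖G x‖) := by
  classical
  set N := Module.finrank ℝ E with hN
  set o := stdOrthonormalBasis ℝ E with ho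
  set L := G.linear with hL
  set v : Fin N → E := fun j => L.adjoint (o j) with hv
  set cst : Fin N → ℝ := fun j => ⟪o j, G 0⟫ with hcst
  have hGx : ∀ x, G x = L x + G 0 := by
    intro x
    conv_lhs => rw [AffineMap.decomp G]
    rfl
  have hkey : ∀ x j, ⟪v j, x⟫ = ⟪o j, G x⟫ - cst j := by
    intro x j
    rw [hv]
    simp only
    rw [LinearMap.adjoint_inner_left, hGx x, inner_add_right]
    simp [hcst]
  have hzero : ∀ x, G x = 0 ↔ ∀ j, ⟪o j, G x⟫ = 0 := by
    intro x
    constructor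
    · intro h j; rw [h, inner_zero_right]
    · intro h
      have : o.repr (G x) = 0 := by
        ext j
        rw [o.repr_apply_apply]
        simpa using h j
      simpa using o.repr.injective (by simpa using this)
  refine ⟨ι ⊕ (Fin N ⊕ Fin N), inferInstance,
    Sum.elim a (Sum.elim v fun j => -(v j)),
    Sum.elim b (Sum.elim (fun j => -cst j) cst), ?_, ?_⟩
  · ext x
    simp only [Set.mem_inter_iff, Set.mem_setOf_eq, Sum.forall, Sum.elim_inl, Sum.elim_inr]
    constructor
    · rintro ⟨hz, hp⟩
      have h0 := (hzero x).1 hz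
      refine ⟨hp, fun j => ?_, fun j => ?_⟩
      · rw [hkey x j, h0 j]; simp
      · rw [inner_neg_left, hkey x j, h0 j]; simp
    · rintro ⟨hp, h1, h2⟩
      refine ⟨(hzero x).2 fun j => ?_, hp⟩
      have ha := h1 j
      have hb := h2 j
      rw [hkey x j] at ha
      rw [inner_neg_left, hkey x j] at hb
      linarith
  · intro x hp
    have hn : (0:ℝ) ≤ ‖G x‖ := norm_nonneg _
    intro i'
    rcases i' with i | j | j
    · simp only [Sum.elim_inl]
      have := hp i
      linarith
    · simp only [Sum.elim_inr, Sum.elim_inl]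
      rw [hkey x j]
      have : ⟪o j, G x⟫ ≤ ‖G x‖ := by
        have := real_inner_le_norm (o j) (G x)
        rwa [o.orthonormal.1 j, one_mul] at this
      linarith
    · simp only [Sum.elim_inr]
      rw [inner_neg_left, hkey x j]
      have : ⟪o j, -(G x)⟫ ≤ ‖G x‖ := by
        have := real_inner_le_norm (o j) (-(G x))
        rwa [o.orthonormal.1 j, one_mul, norm_neg] at this
      rw [inner_neg_right] at this
      linarith

theorem hoffman_affine {ι : Type} [Fintype ι] (a : ι → E) (b : ι → ℝ) (G : E →ᵃ[ℝ] E)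
    (hne : ({x | G x = 0} ∩ {x | ∀ i, ⟪a i, x⟫ ≤ b i}).Nonempty) :
    ∃ C ≥ 0, ∀ x, (∀ i, ⟪a i, x⟫ ≤ b i) →
      infDist x ({x | G x = 0} ∩ {x | ∀ i, ⟪a i, x⟫ ≤ b i}) ≤ C * ‖G x‖ := by
  obtain ⟨κ, hκ, a', b', hset, hres⟩ := rep_inter_affine a b G
  obtain ⟨C, hC0, hC⟩ := hoffman_core a' b' (hset ▸ hne)
  exact ⟨C, hC0, fun x hx => by
    rw [hset]
    exact hC x ‖G x‖ (norm_nonneg _) (hres x hx)⟩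

theorem disjoint_dist {ι ι' : Type} [Fintype ι] [Fintype ι']
    (a : ι → E) (b : ι → ℝ) (a' : ι' → E) (b' : ι' → ℝ)
    (hCne : {x : E | ∀ i, ⟪a i, x⟫ ≤ b i}.Nonempty)
    (hDne : {x : E | ∀ i, ⟪a' i, x⟫ ≤ b' i}.Nonempty)
    (hdisj : {x : E | ∀ i, ⟪a i, x⟫ ≤ b i} ∩ {x : E | ∀ i, ⟪a' i, x⟫ ≤ b' i} = ∅) :
    ∃ δ > 0, ∀ x ∈ {x : E | ∀ i, ⟪a i, x⟫ ≤ b i}, ∀ y ∈ {x : E | ∀ i, ⟪a' i, x⟫ ≤ b' i},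
      δ ≤ dist x y := by
  classical
  set F := WithLp 2 (E × ℝ) with hF
  haveI : FiniteDimensional ℝ F := Module.Finite.equiv (WithLp.linearEquiv 2 ℝ (E × ℝ)).symm
  set U := (WithLp.equiv 2 (E × ℝ)).symm with hU
  have hinner : ∀ (u : E) (c : ℝ) (z : F),
      ⟪U (u, c), z⟫ = ⟪u, (WithLp.equiv 2 (E × ℝ) z).1⟫ + c * (WithLp.equiv 2 (E × ℝ) z).2 := by
    intro u c z
    rw [WithLp.prod_inner_apply]
    rw [hU]
    simp [RCLike.inner_apply]
    ring
  set g : (ι ⊕ ι') ⊕ Unit → F :=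
    Sum.elim (Sum.elim (fun i => U (a i, b i)) (fun i => U (a' i, b' i))) (fun _ => U (0, 1))
    with hg
  have hmem : U (0, -1) ∈ coneOf g Finset.univ := by
    by_contra hc
    obtain ⟨y, hy, hdy⟩ := farkas g Finset.univ _ hc
    set w := (WithLp.equiv 2 (E × ℝ) y).1 with hw
    set sc := (WithLp.equiv 2 (E × ℝ) y).2 with hsc
    have hs : sc < 0 := by
      have h1 : ⟪g (Sum.inr ()), y⟫ ≤ 0 := hy _ (Finset.mem_univ _)
      rw [hg] at h1
      simp only [Sum.elim_inr] at h1
      rw [hinner] at h1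
      simp only [inner_zero_left, one_mul, zero_add] at h1
      have h2 : 0 < ⟪U (0, -1), y⟫ := hdy
      rw [hinner] at h2
      simp only [inner_zero_left, zero_add] at h2
      nlinarith
    set x : E := (-sc)⁻¹ • w with hx
    have hxmem : ∀ (ιz : Type) (az : ιz → E) (bz : ιz → ℝ),
        (∀ i, ⟪az i, w⟫ + bz i * sc ≤ 0) → ∀ i, ⟪az i, x⟫ ≤ bz i := by
      intro ιz az bz hz i
      rw [hx, real_inner_smul_right]
      have h3 : ⟪az i, w⟫ ≤ bz i * (-sc) := by nlinarith [hz i]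
      calc (-sc)⁻¹ * ⟪az i, w⟫ ≤ (-sc)⁻¹ * (bz i * (-sc)) := by
            apply mul_le_mul_of_nonneg_left h3
            exact inv_nonneg.2 (by linarith)
      _ = bz i := by
            have hsne : sc ≠ 0 := ne_of_lt hs
            field_simp
    have hxC : ∀ i, ⟪a i, x⟫ ≤ b i := by
      apply hxmem ι a b
      intro i
      have := hy (Sum.inl (Sum.inl i)) (Finset.mem_univ _)
      rw [hg] at this
      simpa [hinner, hw, hsc] using this
    have hxD : ∀ i, ⟪a' i, x⟫ ≤ b' i := by
      apply hxmem ι' a' b'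
      intro i
      have := hy (Sum.inl (Sum.inr i)) (Finset.mem_univ _)
      rw [hg] at this
      simpa [hinner, hw, hsc] using this
    have : x ∈ ({x : E | ∀ i, ⟪a i, x⟫ ≤ b i} ∩ {x : E | ∀ i, ⟪a' i, x⟫ ≤ b' i}) := ⟨hxC, hxD⟩
    rw [hdisj] at this
    exact this
  obtain ⟨u, hu0, hueq⟩ := hmem
  -- split components
  have hcomp := congrArg (fun z : F => WithLp.equiv 2 (E × ℝ) z) hueq
  have hmapsum : WithLp.equiv 2 (E × ℝ) (∑ r ∈ Finset.univ, u r • g r)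
      = ∑ r ∈ Finset.univ, u r • (WithLp.equiv 2 (E × ℝ) (g r)) := by
    have h1 := map_sum (WithLp.linearEquiv 2 ℝ (E × ℝ)) (fun r => u r • g r) Finset.univ
    have h2 : ∀ r, WithLp.linearEquiv 2 ℝ (E × ℝ) (u r • g r)
        = u r • WithLp.equiv 2 (E × ℝ) (g r) := by
      intro r
      rw [map_smul]
      rfl
    rw [show ⇑(WithLp.linearEquiv 2 ℝ (E × ℝ)) = ⇑(WithLp.equiv 2 (E × ℝ)) from rfl] at h1
    rw [h1]
    exact Finset.sum_congr rfl fun r _ => by rw [← h2 r]; rfl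
  rw [hmapsum] at hcomp
  have hfst : (0:E) = ∑ r, u r • (WithLp.equiv 2 (E × ℝ) (g r)).1 := by
    have := congrArg Prod.fst hcomp
    simpa [Prod.fst_sum, hU] using this
  have hsnd : (-1:ℝ) = ∑ r, u r • (WithLp.equiv 2 (E × ℝ) (g r)).2 := by
    have := congrArg Prod.snd hcomp
    simpa [Prod.snd_sum, hU] using this
  set u1 : ι → ℝ := fun i => u (Sum.inl (Sum.inl i)) with hu1
  set u2 : ι' → ℝ := fun i => u (Sum.inl (Sum.inr i)) with hu2
  set t0 : ℝ := u (Sum.inr ()) with ht0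
  set A : E := ∑ i, u1 i • a i with hA
  set A' : E := ∑ i, u2 i • a' i with hA'
  have hfst' : A + A' = 0 := by
    rw [hA, hA']
    rw [Fintype.sum_sum_type, Fintype.sum_sum_type] at hfst
    simp only [hg, hU, Sum.elim_inl, Sum.elim_inr, Equiv.apply_symm_apply] at hfst
    simpa using hfst.symm
  have hsnd' : (∑ i, u1 i * b i) + (∑ i, u2 i * b' i) ≤ -1 := by
    rw [Fintype.sum_sum_type, Fintype.sum_sum_type] at hsnd
    simp only [hg, hU, Sum.elim_inl, Sum.elim_inr, Equiv.apply_symm_apply] at hsnd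
    have ht0nn : 0 ≤ t0 := hu0 _ (Finset.mem_univ _)
    have hun : ∑ x : Unit, u (Sum.inr x) = t0 := by simp [ht0]
    simp only [smul_eq_mul, mul_one] at hsnd
    rw [hun] at hsnd
    simp only [hu1, hu2]
    linarith
  have hAxf : ∀ x : E, (∀ i, ⟪a i, x⟫ ≤ b i) → ⟪A, x⟫ ≤ ∑ i, u1 i * b i := by
    intro x hx
    rw [hA, sum_inner]
    apply Finset.sum_le_sum
    intro i _
    rw [real_inner_smul_left]
    exact mul_le_mul_of_nonneg_left (hx i) (hu0 _ (Finset.mem_univ _))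
  have hA'yf : ∀ y : E, (∀ i, ⟪a' i, y⟫ ≤ b' i) → ⟪A', y⟫ ≤ ∑ i, u2 i * b' i := by
    intro y hy
    rw [hA', sum_inner]
    apply Finset.sum_le_sum
    intro i _
    rw [real_inner_smul_left]
    exact mul_le_mul_of_nonneg_left (hy i) (hu0 _ (Finset.mem_univ _))
  have hAne : A ≠ 0 := by
    intro h0
    have hA'0 : A' = 0 := by rw [h0, zero_add] at hfst'; exact hfst'
    obtain ⟨x₀, hx₀⟩ := hCne
    obtain ⟨y₀, hy₀⟩ := hDne
    have h1 := hAxf x₀ hx₀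
    have h2 := hA'yf y₀ hy₀
    rw [h0, inner_zero_left] at h1
    rw [hA'0, inner_zero_left] at h2
    linarith
  refine ⟨‖A‖⁻¹, inv_pos.2 (norm_pos_iff.2 hAne), ?_⟩
  intro x hx y hy
  have hAx := hAxf x hx
  have hA'y := hA'yf y hy
  have hkey : ⟪A, x - y⟫ ≤ -1 := by
    have hAy : ⟪A, y⟫ = -⟪A', y⟫ := by
      have : A = -A' := eq_neg_of_add_eq_zero_left hfst'
      rw [this, inner_neg_left]
    rw [inner_sub_right, hAy]
    linarith
  have hCS : ⟪A, y - x⟫ ≤ ‖A‖ * ‖y - x‖ := real_inner_le_norm _ _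
  have h1le : (1:ℝ) ≤ ‖A‖ * ‖y - x‖ := by
    have : ⟪A, y - x⟫ = -⟪A, x - y⟫ := by rw [← inner_neg_right]; congr 1; abel
    nlinarith
  have hApos : 0 < ‖A‖ := norm_pos_iff.2 hAne
  rw [dist_eq_norm']
  have h4 : ‖A‖⁻¹ * 1 ≤ ‖A‖⁻¹ * (‖A‖ * ‖y - x‖) :=
    mul_le_mul_of_nonneg_left h1le (inv_nonneg.2 hApos.le)
  rwa [mul_one, ← mul_assoc, inv_mul_cancel₀ hApos.ne', one_mul] at h4


end Cone

open scoped RealInnerProductSpace in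
theorem stmt_7 {n k : ℕ}
    (P : Fin k → Set (EuclideanSpace ℝ (Fin n)))
    (hPpoly : ∀ j, IsPolyhedron (P j)) (hPne : ∀ j, (P j).Nonempty)
    (hcover : (⋃ j, P j) = Set.univ)
    (Faff : Fin k → (EuclideanSpace ℝ (Fin n) →ᵃ[ℝ] EuclideanSpace ℝ (Fin n)))
    (hcompat : ∀ i j, ∀ x ∈ P i ∩ P j, Faff i x = Faff j x)
    (F : EuclideanSpace ℝ (Fin n) → EuclideanSpace ℝ (Fin n))
    (hF : ∀ j, ∀ x ∈ P j, F x = Faff j x)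
    (𝓕 : Set (EuclideanSpace ℝ (Fin n))) (h𝓕 : 𝓕 = {x | F x = x}) (hne : 𝓕.Nonempty)
    (K : ℝ)
    (hK : K = sSup ((fun j => hoffmanConst (fun x => x - Faff j x) (P j)) ''
      {j | (P j ∩ 𝓕).Nonempty})) :
    ∃ R > 0, ∀ x, infDist x 𝓕 ≤ R → infDist x 𝓕 ≤ K * ‖F x - x‖ := by
  classical
  -- inner-product representation of the polyhedra
  have hrep : ∀ j, ∃ (m : ℕ) (a : Fin m → EuclideanSpace ℝ (Fin n)) (bb : Fin m → ℝ),
      P j = {x | ∀ i, ⟪a i, x⟫ ≤ bb i} := by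
    intro j
    obtain ⟨m, A, bb, hPj⟩ := hPpoly j
    refine ⟨m, fun i => (WithLp.equiv 2 (Fin n → ℝ)).symm (A i), bb, ?_⟩
    rw [hPj]
    ext x
    simp only [Set.mem_setOf_eq]
    refine forall_congr' fun i => ?_
    have heq : ⟪(WithLp.equiv 2 (Fin n → ℝ)).symm (A i), x⟫ = Matrix.toEuclideanLin A x i := by
      rw [PiLp.inner_apply, Matrix.toEuclideanLin_apply]
      simp [Matrix.mulVec, dotProduct, mul_comm]
    rw [heq]
  choose mm aa bb hab using hrep
  -- the affine operators x ↦ x - Faff j x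
  set G : Fin k → (EuclideanSpace ℝ (Fin n) →ᵃ[ℝ] EuclideanSpace ℝ (Fin n)) := fun j =>
    { toFun := fun x => x - Faff j x
      linear := LinearMap.id - (Faff j).linear
      map_vadd' := fun p v => by
        have h := (Faff j).map_vadd p v
        simp only [vadd_eq_add, LinearMap.sub_apply, LinearMap.id_apply] at *
        rw [h]
        abel } with hG
  have hGapp : ∀ j x, G j x = x - Faff j x := fun _ _ => rfl
  -- fixed point pieces
  have hZP : ∀ j, {y : EuclideanSpace ℝ (Fin n) | y - Faff j y = 0} ∩ P j = P j ∩ 𝓕 := by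
    intro j
    ext y
    simp only [Set.mem_inter_iff, Set.mem_setOf_eq, h𝓕]
    constructor
    · rintro ⟨hz, hp⟩
      exact ⟨hp, by rw [hF j y hp]; exact (sub_eq_zero.1 hz).symm⟩
    · rintro ⟨hp, hfix⟩
      refine ⟨?_, hp⟩
      rw [sub_eq_zero, ← hF j y hp]
      exact hfix.symm
  have hZP' : ∀ j, {y : EuclideanSpace ℝ (Fin n) | G j y = 0} ∩ P j = P j ∩ 𝓕 := hZP
  -- pieces are closed
  have hpiececlosed : ∀ j, IsClosed (P j ∩ 𝓕) := by
    intro j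
    obtain ⟨κ, hκ, a', b', hset, -⟩ := rep_inter_affine (aa j) (bb j) (G j)
    rw [← hab j] at hset
    rw [← hZP' j, hset]
    exact sys_closed a' b'
  have h𝓕union : 𝓕 = ⋃ j, (P j ∩ 𝓕) := by
    have : (⋃ j, (P j ∩ 𝓕)) = (⋃ j, P j) ∩ 𝓕 := (Set.iUnion_inter _ _).symm
    rw [this, hcover, Set.univ_inter]
  have h𝓕closed : IsClosed 𝓕 := by
    rw [h𝓕union]
    exact isClosed_iUnion_of_finite hpiececlosed
  -- Hoffman bound on each relevant piece
  have hHoff : ∀ j, (P j ∩ 𝓕).Nonempty →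
      ∃ C ≥ 0, ∀ x ∈ P j, infDist x (P j ∩ 𝓕) ≤ C * ‖x - Faff j x‖ := by
    intro j hne'
    have hset : {y : EuclideanSpace ℝ (Fin n) | G j y = 0}
        ∩ {x | ∀ i, ⟪aa j i, x⟫ ≤ bb j i} = P j ∩ 𝓕 := by
      rw [← hab j]; exact hZP' j
    obtain ⟨C, hC0, hC⟩ := hoffman_affine (aa j) (bb j) (G j) (by rw [hset]; exact hne')
    refine ⟨C, hC0, fun x hx => ?_⟩
    have hx' : ∀ i, ⟪aa j i, x⟫ ≤ bb j i := by rw [hab j] at hx; exact hx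
    have h1 := hC x hx'
    rw [hset] at h1
    exact h1
  -- the hoffmanConst dominates
  have hKey : ∀ j, (P j ∩ 𝓕).Nonempty →
      (0 ≤ hoffmanConst (fun x => x - Faff j x) (P j)) ∧
      (∀ x ∈ P j, infDist x (P j ∩ 𝓕) ≤
        hoffmanConst (fun x => x - Faff j x) (P j) * ‖x - Faff j x‖) := by
    intro j hne'
    obtain ⟨C, hC0, hC⟩ := hHoff j hne'
    set S : Set ℝ := (fun x => infDist x ({y | y - Faff j y = 0} ∩ P j) / ‖x - Faff j x‖) ''
      (P j \ {y | y - Faff j y = 0}) with hSdef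
    have hconst : hoffmanConst (fun x => x - Faff j x) (P j) = sSup S := rfl
    have hSbdd : BddAbove S := by
      refine ⟨C, fun v hv => ?_⟩
      obtain ⟨y, ⟨hyP, hyZ⟩, rfl⟩ := hv
      have hynz : y - Faff j y ≠ 0 := by simpa using hyZ
      have hnpos : 0 < ‖y - Faff j y‖ := norm_pos_iff.2 hynz
      rw [div_le_iff₀ hnpos]
      calc infDist y ({y | y - Faff j y = 0} ∩ P j) = infDist y (P j ∩ 𝓕) := by rw [hZP j]
      _ ≤ C * ‖y - Faff j y‖ := hC y hyP
    have hS0 : ∀ v ∈ S, 0 ≤ v := by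
      rintro v ⟨y, ⟨hyP, hyZ⟩, rfl⟩
      exact div_nonneg infDist_nonneg (norm_nonneg _)
    constructor
    · rw [hconst]
      rcases Set.eq_empty_or_nonempty S with hSe | hSne
      · rw [hSe, Real.sSup_empty]
      · obtain ⟨v, hv⟩ := hSne
        exact le_trans (hS0 v hv) (le_csSup hSbdd hv)
    · intro x hx
      by_cases hz : x - Faff j x = 0
      · have hx𝓕 : x ∈ P j ∩ 𝓕 := by
          rw [← hZP j]
          exact ⟨hz, hx⟩
        rw [infDist_zero_of_mem hx𝓕]
        rw [show ‖x - Faff j x‖ = 0 from norm_eq_zero.2 hz, mul_zero]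
      · have hmemS : infDist x ({y | y - Faff j y = 0} ∩ P j) / ‖x - Faff j x‖ ∈ S :=
          ⟨x, ⟨hx, hz⟩, rfl⟩
        have hle := le_csSup hSbdd hmemS
        have hnpos : 0 < ‖x - Faff j x‖ := norm_pos_iff.2 hz
        have h2 := mul_le_mul_of_nonneg_right hle hnpos.le
        rw [div_mul_cancel₀ _ hnpos.ne'] at h2
        rw [hconst]
        calc infDist x (P j ∩ 𝓕) = infDist x ({y | y - Faff j y = 0} ∩ P j) := by rw [hZP j]
        _ ≤ sSup S * ‖x - Faff j x‖ := h2
  -- K dominates each hoffmanConst on relevant pieces, and K ≥ 0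
  have hJbdd : BddAbove ((fun j => hoffmanConst (fun x => x - Faff j x) (P j)) ''
      {j | (P j ∩ 𝓕).Nonempty}) := (Set.toFinite _).image _ |>.bddAbove
  have hKj : ∀ j, (P j ∩ 𝓕).Nonempty → hoffmanConst (fun x => x - Faff j x) (P j) ≤ K := by
    intro j hj
    rw [hK]
    exact le_csSup hJbdd (Set.mem_image_of_mem _ hj)
  obtain ⟨z, hz𝓕⟩ := id hne
  have hzU : z ∈ ⋃ j, P j := by rw [hcover]; trivial
  obtain ⟨j₀, hj₀⟩ := Set.mem_iUnion.1 hzU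
  have hj₀J : (P j₀ ∩ 𝓕).Nonempty := ⟨z, hj₀, hz𝓕⟩
  have hK0 : 0 ≤ K := le_trans (hKey j₀ hj₀J).1 (hKj j₀ hj₀J)
  -- positive separation from irrelevant pieces
  have hpair : ∀ p : Fin k × Fin k, ∃ δ > 0, (P p.1 ∩ 𝓕 = ∅) → (P p.2 ∩ 𝓕).Nonempty →
      ∀ x ∈ P p.1, ∀ y ∈ P p.2 ∩ 𝓕, δ ≤ dist x y := by
    rintro ⟨i, j⟩
    by_cases hcond : (P i ∩ 𝓕 = ∅) ∧ (P j ∩ 𝓕).Nonempty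
    · obtain ⟨hie, hjne⟩ := hcond
      obtain ⟨κ, hκ, a', b', hset, -⟩ := rep_inter_affine (aa j) (bb j) (G j)
      rw [← hab j, hZP' j] at hset
      have hCne : {x : EuclideanSpace ℝ (Fin n) | ∀ i', ⟪aa i i', x⟫ ≤ bb i i'}.Nonempty := by
        rw [← hab i]; exact hPne i
      have hDne : {x : EuclideanSpace ℝ (Fin n) | ∀ i', ⟪a' i', x⟫ ≤ b' i'}.Nonempty := by
        rw [← hset]; exact hjne
      have hdisj : {x : EuclideanSpace ℝ (Fin n) | ∀ i', ⟪aa i i', x⟫ ≤ bb i i'}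
          ∩ {x | ∀ i', ⟪a' i', x⟫ ≤ b' i'} = ∅ := by
        rw [← hab i, ← hset]
        rw [Set.eq_empty_iff_forall_notMem]
        rintro x ⟨hxi, hxj, hx𝓕⟩
        rw [Set.eq_empty_iff_forall_notMem] at hie
        exact hie x ⟨hxi, hx𝓕⟩
      obtain ⟨δ, hδpos, hδ⟩ := disjoint_dist (aa i) (bb i) a' b' hCne hDne hdisj
      refine ⟨δ, hδpos, fun _ _ x hxi y hyj => ?_⟩
      apply hδ
      · rw [hab i] at hxi; exact hxi
      · rw [← hset]; exact hyj
    · refine ⟨1, one_pos, fun h1 h2 => absurd ⟨h1, h2⟩ hcond⟩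
  choose δ hδpos hδ using hpair
  have hkne : Nonempty (Fin k) := ⟨j₀⟩
  have huniv_ne : (Finset.univ : Finset (Fin k × Fin k)).Nonempty := ⟨(j₀, j₀), Finset.mem_univ _⟩
  set R : ℝ := (Finset.univ.inf' huniv_ne δ) / 2 with hR
  have hRpos : 0 < R := by
    rw [hR]
    apply div_pos _ two_pos
    rw [Finset.lt_inf'_iff]
    exact fun p _ => hδpos p
  refine ⟨R, hRpos, fun x hx => ?_⟩
  have hxU : x ∈ ⋃ j, P j := by rw [hcover]; trivial
  obtain ⟨j, hxj⟩ := Set.mem_iUnion.1 hxU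
  by_cases hJ : (P j ∩ 𝓕).Nonempty
  · -- Hoffman estimate
    have h1 : infDist x 𝓕 ≤ infDist x (P j ∩ 𝓕) :=
      infDist_le_infDist_of_subset Set.inter_subset_right hJ
    have h2 := (hKey j hJ).2 x hxj
    have h3 : hoffmanConst (fun x => x - Faff j x) (P j) * ‖x - Faff j x‖ ≤
        K * ‖x - Faff j x‖ :=
      mul_le_mul_of_nonneg_right (hKj j hJ) (norm_nonneg _)
    have h4 : ‖x - Faff j x‖ = ‖F x - x‖ := by
      rw [hF j x hxj, norm_sub_rev]
    rw [h4] at h3 h2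
    linarith
  · -- impossible: x is too close to 𝓕
    exfalso
    have hie : P j ∩ 𝓕 = ∅ := Set.not_nonempty_iff_eq_empty.1 hJ
    obtain ⟨y, hy𝓕, hyd⟩ := h𝓕closed.exists_infDist_eq_dist hne x
    have hyU : y ∈ ⋃ j', P j' := by rw [hcover]; trivial
    obtain ⟨j', hyj'⟩ := Set.mem_iUnion.1 hyU
    have hj'J : (P j' ∩ 𝓕).Nonempty := ⟨y, hyj', hy𝓕⟩
    have hd := hδ (j, j') hie hj'J x hxj y ⟨hyj', hy𝓕⟩
    have hinf : δ (j, j') ≤ infDist x 𝓕 := by rw [hyd]; exact hd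
    have hmle : Finset.univ.inf' huniv_ne δ ≤ δ (j, j') :=
      Finset.inf'_le _ (Finset.mem_univ _)
    have hmpos : 0 < Finset.univ.inf' huniv_ne δ := by
      rw [Finset.lt_inf'_iff]
      exact fun p _ => hδpos p
    have hfin : δ (j, j') ≤ R := le_trans hinf hx
    rw [hR] at hfin
    linarith
end

section
/- Let f : ℝⁿ → ℝ be convex, differentiable, and λ > 0, α ∈ (0,1). The gradient descent operator F(x) = x - λ∇f(x) is α-averaged if and only if ∇f is co-coercive with constant λ/(2α), i.e., (x-y)ᵀ(∇f(x)-∇f(y)) ≥ (λ/(2α))‖∇f(x)-∇f(y)‖² for all x, y. -/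
/-! `F = I - λ g` equals `(1 - α) I + α N` exactly when `N = I - (λ / α) g`, and expanding
`‖(x - y) - c (g x - g y)‖² ≤ ‖x - y‖²` shows that `I - c g` is nonexpansive iff `g` is
co-coercive with constant `c / 2`. -/

open RealInnerProductSpace

section

variable {E : Type*} [NormedAddCommGroup E] [InnerProductSpace ℝ E]

lemma norm_sub_smul_le_norm_iff {c : ℝ} (hc : 0 < c) (a b : E) :
    ‖a - c • b‖ ≤ ‖a‖ ↔ c / 2 * ‖b‖ ^ 2 ≤ ⟪a, b⟫ := by
  have expand : ‖a - c • b‖ ^ 2 = ‖a‖ ^ 2 - 2 * c * ⟪a, b⟫ + c ^ 2 * ‖b‖ ^ 2 := by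
    rw [norm_sub_sq_real, real_inner_smul_right, norm_smul, Real.norm_of_nonneg hc.le]
    ring
  rw [← sq_le_sq₀ (norm_nonneg _) (norm_nonneg _), expand]
  constructor <;> intro h <;> nlinarith

lemma nonexpansive_id_sub_smul_iff {c : ℝ} (hc : 0 < c) (g : E → E) :
    (∀ x y, ‖(x - c • g x) - (y - c • g y)‖ ≤ ‖x - y‖) ↔
      ∀ x y, c / 2 * ‖g x - g y‖ ^ 2 ≤ ⟪x - y, g x - g y⟫ := by
  refine forall₂_congr fun x y => ?_
  rw [← norm_sub_smul_le_norm_iff hc, smul_sub]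
  congr! 2
  abel

end

lemma sub_smul_eq_averaged_iff {V : Type*} [AddCommGroup V] [Module ℝ V] {α : ℝ} (hα : α ≠ 0)
    (lam : ℝ) (x v w : V) :
    x - lam • v = (1 - α) • x + α • w ↔ w = x - (lam / α) • v := by
  rw [div_eq_inv_mul, mul_smul]
  constructor
  · intro h
    rw [← inv_smul_smul₀ hα w, eq_sub_of_add_eq' h.symm]
    match_scalars <;> field_simp
    ring
  · rintro rfl
    rw [smul_sub, smul_inv_smul₀ hα]
    module

theorem stmt_12_general {n : ℕ}
    (f' : EuclideanSpace ℝ (Fin n) → EuclideanSpace ℝ (Fin n))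
    (lam α : ℝ) (hlam : 0 < lam) (hα : α ∈ Set.Ioo (0:ℝ) 1)
    (F : EuclideanSpace ℝ (Fin n) → EuclideanSpace ℝ (Fin n))
    (hF : ∀ x, F x = x - lam • f' x) :
    (∃ N : EuclideanSpace ℝ (Fin n) → EuclideanSpace ℝ (Fin n),
      (∀ x y, ‖N x - N y‖ ≤ ‖x - y‖) ∧ ∀ x, F x = (1 - α) • x + α • N x) ↔
    (∀ x y, (lam / (2 * α)) * ‖f' x - f' y‖ ^ 2 ≤ ⟪x - y, f' x - f' y⟫) := by
  have hN : ∀ N : EuclideanSpace ℝ (Fin n) → EuclideanSpace ℝ (Fin n),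
      (∀ x, F x = (1 - α) • x + α • N x) ↔ N = fun x => x - (lam / α) • f' x := by
    intro N
    simp only [hF, sub_smul_eq_averaged_iff hα.1.ne', funext_iff]
  simp only [hN, exists_eq_right, div_mul_eq_div_div_swap]
  exact nonexpansive_id_sub_smul_iff (div_pos hlam hα.1) f'

theorem stmt_12 {n : ℕ} (f : EuclideanSpace ℝ (Fin n) → ℝ)
    (hconv : ConvexOn ℝ Set.univ f)
    (f' : EuclideanSpace ℝ (Fin n) → EuclideanSpace ℝ (Fin n))
    (hf' : ∀ x, HasGradientAt f (f' x) x)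
    (lam α : ℝ) (hlam : 0 < lam) (hα : α ∈ Set.Ioo (0:ℝ) 1)
    (F : EuclideanSpace ℝ (Fin n) → EuclideanSpace ℝ (Fin n))
    (hF : ∀ x, F x = x - lam • f' x) :
    (∃ N : EuclideanSpace ℝ (Fin n) → EuclideanSpace ℝ (Fin n),
      (∀ x y, ‖N x - N y‖ ≤ ‖x - y‖) ∧ ∀ x, F x = (1 - α) • x + α • N x) ↔
    (∀ x y, (lam / (2 * α)) * ‖f' x - f' y‖ ^ 2 ≤ ⟪x - y, f' x - f' y⟫) :=
  stmt_12_general f' lam α hlam hα F hF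
end

section
/- Let A ∈ ℝ^{m×n} with full row rank when restricted to rows J ⊆ [m] (rank(A_Jᵀ) = |J|), b ∈ ℝ^m, c ∈ ℝⁿ, γ > 0, α ∈ (0,1). Define G_J(x) = 2α(A_J† A_J x - A_J† b_J + γc) and P_J = X_J + A_Jᵀ ℝ₊^{|J|} where X_J = {x : Ax ≤ b, A_J x = b_J} ≠ ∅. If G_J⁻¹(0) ∩ P_J ≠ ∅, then for every x ∈ P_J, the projection of x onto G_J⁻¹(0) lies in P_J; consequently dist(x, G_J⁻¹(0) ∩ P_J) = dist(x, G_J⁻¹(0)) and H(G_J | P_J) ≤ H(G_J). -/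
open Metric

open RealInnerProductSpace in
private lemma teLin_mul {k l p : ℕ} (M : Matrix (Fin k) (Fin l) ℝ) (N : Matrix (Fin l) (Fin p) ℝ)
    (x : EuclideanSpace ℝ (Fin p)) :
    Matrix.toEuclideanLin (M * N) x = Matrix.toEuclideanLin M (Matrix.toEuclideanLin N x) := by
  simp [Matrix.toEuclideanLin_apply, Matrix.mulVec_mulVec]

private lemma isUnit_of_rank_eq {k : ℕ} (M : Matrix (Fin k) (Fin k) ℝ) (h : M.rank = k) :
    IsUnit M := by
  rw [Matrix.isUnit_iff_isUnit_det, isUnit_iff_ne_zero]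
  intro hdet
  obtain ⟨v, hv, hMv⟩ := Matrix.exists_mulVec_eq_zero_iff.2 hdet
  have hsurj : Function.Surjective M.mulVecLin := by
    rw [← LinearMap.range_eq_top]
    apply Submodule.eq_top_of_finrank_eq
    rw [← Matrix.rank, h, Module.finrank_fintype_fun_eq_card, Fintype.card_fin]
  have hinj : Function.Injective M.mulVecLin := LinearMap.injective_iff_surjective.2 hsurj
  exact hv (hinj (by simpa [Matrix.mulVecLin_apply] using hMv))

open RealInnerProductSpace in
private lemma proj_min {E : Type*} [NormedAddCommGroup E] [InnerProductSpace ℝ E]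
    (L : E →ₗ[ℝ] E) (hsym : ∀ a b : E, ⟪L a, b⟫ = ⟪a, L b⟫)
    (hidem : ∀ a : E, L (L a) = L a) (v : E) (hv : L v = v) (x : E) :
    L (x - L x + v) = v ∧ ∀ y : E, L y = v → ‖x - (x - L x + v)‖ ≤ ‖x - y‖ := by
  constructor
  · simp [map_sub, map_add, hidem, hv]
  · intro y hy
    set w : E := (x - y) - (L x - v) with hw
    have hLw : L w = 0 := by simp [hw, map_sub, hy, hidem, hv]
    have horth : ⟪L x - v, w⟫ = 0 := by
      have : L x - v = L (x - v) := by rw [map_sub, hv]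
      rw [this, hsym, hLw, inner_zero_right]
    have hdecomp : x - y = (L x - v) + w := by rw [hw]; abel
    have hxz : x - (x - L x + v) = L x - v := by abel
    rw [hxz, hdecomp]
    have hsq := norm_add_sq_real (L x - v) w
    nlinarith [norm_nonneg w, norm_nonneg (L x - v), norm_nonneg ((L x - v) + w),
      sq_nonneg (‖L x - v‖ - ‖(L x - v) + w‖)]

theorem stmt_13 {m n : ℕ} (A : Matrix (Fin m) (Fin n) ℝ) (b : Fin m → ℝ)
    (c : EuclideanSpace ℝ (Fin n)) (γ α : ℝ) (hγ : 0 < γ) (hα : α ∈ Set.Ioo (0:ℝ) 1)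
    (J : Finset (Fin m))
    (AJ : Matrix (Fin J.card) (Fin n) ℝ)
    (hAJ : AJ = A.submatrix (fun i => ((J.orderIsoOfFin rfl i : {i // i ∈ J}) : Fin m)) id)
    (bJ : EuclideanSpace ℝ (Fin J.card))
    (hbJ : ∀ i, bJ i = b ((J.orderIsoOfFin rfl i : {i // i ∈ J}) : Fin m))
    (hrank : AJ.transpose.rank = J.card)
    (pinv : Matrix (Fin n) (Fin J.card) ℝ)
    (hpinv : pinv = AJ.transpose * (AJ * AJ.transpose)⁻¹)
    (G : EuclideanSpace ℝ (Fin n) → EuclideanSpace ℝ (Fin n))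
    (hG : ∀ x, G x = (2 * α) •
      (Matrix.toEuclideanLin (pinv * AJ) x - Matrix.toEuclideanLin pinv bJ + γ • c))
    (XJ PJ : Set (EuclideanSpace ℝ (Fin n)))
    (hXJ : XJ = {x | (∀ i, Matrix.toEuclideanLin A x i ≤ b i) ∧
      Matrix.toEuclideanLin AJ x = bJ})
    (hXJne : XJ.Nonempty)
    (hPJ : PJ = {y | ∃ x ∈ XJ, ∃ s : EuclideanSpace ℝ (Fin J.card),
      (∀ i, 0 ≤ s i) ∧ y = x + Matrix.toEuclideanLin AJ.transpose s})
    (hmeet : ({x | G x = 0} ∩ PJ).Nonempty) :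
    (∀ x ∈ PJ, ∃ z ∈ {y | G y = 0} ∩ PJ, dist x z = infDist x {y | G y = 0}) ∧
    (∀ x ∈ PJ, infDist x ({y | G y = 0} ∩ PJ) = infDist x {y | G y = 0}) ∧
    hoffmanConst G PJ ≤ hoffmanConst G Set.univ := by
  have hα0 : (0:ℝ) < 2 * α := by linarith [hα.1]
  set L : EuclideanSpace ℝ (Fin n) →ₗ[ℝ] EuclideanSpace ℝ (Fin n) :=
    Matrix.toEuclideanLin (pinv * AJ) with hL
  set T : EuclideanSpace ℝ (Fin J.card) →ₗ[ℝ] EuclideanSpace ℝ (Fin n) :=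
    Matrix.toEuclideanLin AJ.transpose with hT
  set u : EuclideanSpace ℝ (Fin n) := Matrix.toEuclideanLin pinv bJ with hu
  set v : EuclideanSpace ℝ (Fin n) := u - γ • c with hv
  -- rewrite G
  have hGx : ∀ x, G x = (2 * α) • (L x - v) := by
    intro x; rw [hG x]; congr 1; rw [hv]; abel
  have hS : ∀ x, G x = 0 ↔ L x = v := by
    intro x
    rw [hGx x, smul_eq_zero, sub_eq_zero]
    simp [hα0.ne']
  -- matrix identities
  have hdet : IsUnit (AJ * AJ.transpose).det := by
    apply (Matrix.isUnit_iff_isUnit_det _).1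
    apply isUnit_of_rank_eq
    rw [Matrix.rank_self_mul_transpose, ← Matrix.rank_transpose, hrank]
  have hAP : AJ * pinv = 1 := by
    rw [hpinv, ← Matrix.mul_assoc, Matrix.mul_nonsing_inv _ hdet]
  have hQQ : (pinv * AJ) * (pinv * AJ) = pinv * AJ := by
    rw [Matrix.mul_assoc, ← Matrix.mul_assoc AJ pinv AJ, hAP, Matrix.one_mul]
  have hQAt : (pinv * AJ) * AJ.transpose = AJ.transpose := by
    rw [Matrix.mul_assoc, hpinv, Matrix.mul_assoc, Matrix.nonsing_inv_mul _ hdet,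
      Matrix.mul_one]
  have hQT : (pinv * AJ).transpose = pinv * AJ := by
    have h1 : ((AJ * AJ.transpose)⁻¹).transpose = (AJ * AJ.transpose)⁻¹ := by
      rw [Matrix.transpose_nonsing_inv]
      congr 1
      rw [Matrix.transpose_mul, Matrix.transpose_transpose]
    rw [hpinv, Matrix.transpose_mul, Matrix.transpose_mul, Matrix.transpose_transpose, h1,
      Matrix.mul_assoc]
  -- linear map facts
  have hLL : ∀ a, L (L a) = L a := fun a => by rw [hL, ← teLin_mul, hQQ]
  have hadj : L = LinearMap.adjoint L := by
    rw [hL, ← Matrix.toEuclideanLin_conjTranspose_eq_adjoint]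
    congr 1
    ext i j
    have := congrFun (congrFun hQT j) i
    simpa [Matrix.conjTranspose_apply, Matrix.transpose_apply] using this
  have hsym : ∀ a b : EuclideanSpace ℝ (Fin n),
      inner ℝ (L a) b = (inner ℝ a (L b) : ℝ) := by
    intro a b
    conv_lhs => rw [hadj]
    exact LinearMap.adjoint_inner_left L b a
  have hLT : ∀ s, L (T s) = T s := fun s => by rw [hL, hT, ← teLin_mul, hQAt]
  have hLX : ∀ x0 ∈ XJ, L x0 = u := by
    intro x0 hx0
    rw [hXJ] at hx0
    rw [hL, hu, teLin_mul, hx0.2]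
  -- L v = v
  obtain ⟨w, hwS, hwP⟩ := hmeet
  have hwL : L w = v := (hS w).1 hwS
  have hLv : L v = v := by rw [← hwL, hLL, hwL]
  have hSne : ({y | G y = 0} : Set (EuclideanSpace ℝ (Fin n))).Nonempty := ⟨w, hwS⟩
  obtain ⟨w0, hw0, t, ht, hweq⟩ := hPJ ▸ hwP
  -- universal distance formula
  have hdistU : ∀ x : EuclideanSpace ℝ (Fin n),
      infDist x {y | G y = 0} = ‖L x - v‖ ∧ dist x (x - L x + v) = infDist x {y | G y = 0} := by
    intro x
    obtain ⟨hz1, hz2⟩ := proj_min L hsym hLL v hLv x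
    have hzmem : (x - L x + v) ∈ {y | G y = 0} := (hS _).2 hz1
    have hle : infDist x {y | G y = 0} ≤ dist x (x - L x + v) :=
      infDist_le_dist_of_mem hzmem
    have hge : dist x (x - L x + v) ≤ infDist x {y | G y = 0} := by
      by_contra hcon
      push_neg at hcon
      obtain ⟨y, hy, hlt⟩ := (infDist_lt_iff hSne).1 hcon
      have := hz2 y ((hS y).1 hy)
      rw [dist_eq_norm, dist_eq_norm] at hlt
      linarith
    have hdz : dist x (x - L x + v) = ‖L x - v‖ := by
      rw [dist_eq_norm]
      congr 1
      abel
    exact ⟨by rw [← hdz]; linarith, le_antisymm hge hle⟩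
  -- key: projection stays in PJ
  have key : ∀ x ∈ PJ, ∃ z ∈ {y | G y = 0} ∩ PJ, dist x z = infDist x {y | G y = 0} := by
    intro x hx
    obtain ⟨x0, hx0, s, hs, hxeq⟩ := hPJ ▸ hx
    refine ⟨x - L x + v, ⟨(hS _).2 (proj_min L hsym hLL v hLv x).1, ?_⟩, (hdistU x).2⟩
    have hvval : v = u + T t := by rw [← hwL, hweq, map_add, hLX w0 hw0, hLT]
    have hzeq : x - L x + v = x0 + T t := by
      rw [hxeq, map_add, hLX x0 hx0, hLT, hvval]; abel
    rw [hPJ, hzeq]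
    exact ⟨x0, hx0, t, ht, rfl⟩
  refine ⟨key, ?_, ?_⟩
  · -- second part
    intro x hx
    obtain ⟨z, hz, hdz⟩ := key x hx
    refine le_antisymm ?_ (infDist_le_infDist_of_subset Set.inter_subset_left ⟨z, hz⟩)
    calc infDist x ({y | G y = 0} ∩ PJ) ≤ dist x z := infDist_le_dist_of_mem hz
      _ = infDist x {y | G y = 0} := hdz
  · -- third part
    have part2 : ∀ x ∈ PJ, infDist x ({y | G y = 0} ∩ PJ) = infDist x {y | G y = 0} := by
      intro x hx
      obtain ⟨z, hz, hdz⟩ := key x hx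
      refine le_antisymm ?_ (infDist_le_infDist_of_subset Set.inter_subset_left ⟨z, hz⟩)
      calc infDist x ({y | G y = 0} ∩ PJ) ≤ dist x z := infDist_le_dist_of_mem hz
        _ = infDist x {y | G y = 0} := hdz
    have hval : ∀ x : EuclideanSpace ℝ (Fin n), x ∉ {y | G y = 0} →
        infDist x ({y | G y = 0} ∩ Set.univ) / ‖G x‖ = 1 / (2 * α) := by
      intro x hx
      have hLx : L x ≠ v := fun h => hx ((hS x).2 h)
      have hnorm : (0:ℝ) < ‖L x - v‖ := by
        rw [norm_pos_iff]
        exact sub_ne_zero_of_ne hLx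
      rw [Set.inter_univ, (hdistU x).1, hGx x, norm_smul, Real.norm_eq_abs,
        abs_of_pos hα0, mul_comm (2*α) ‖L x - v‖, ← div_div, div_self hnorm.ne']
    set fU := fun x => infDist x ({y | G y = 0} ∩ Set.univ) / ‖G x‖ with hfU
    set fP := fun x => infDist x ({y | G y = 0} ∩ PJ) / ‖G x‖ with hfP
    have hsub : fP '' (PJ \ {y | G y = 0}) ⊆ fU '' (Set.univ \ {y | G y = 0}) := by
      rintro r ⟨x, ⟨hxP, hxS⟩, rfl⟩
      refine ⟨x, ⟨trivial, hxS⟩, ?_⟩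
      rw [hfU, hfP]
      simp only
      rw [Set.inter_univ, part2 x hxP]
    have hbdd : BddAbove (fU '' (Set.univ \ {y | G y = 0})) := by
      apply BddAbove.mono _ (bddAbove_singleton (a := 1 / (2*α)))
      rintro r ⟨x, hx, rfl⟩
      exact hval x hx.2
    rw [hoffmanConst, hoffmanConst]
    rcases (fP '' (PJ \ {y | G y = 0})).eq_empty_or_nonempty with he | hne
    · rw [he, Real.sSup_empty]
      apply Real.sSup_nonneg
      rintro r ⟨x, _, rfl⟩
      exact div_nonneg infDist_nonneg (norm_nonneg _)
    · exact csSup_le_csSup hbdd hne hsub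
end

section
/- Let A ∈ ℝ^{m×n}, b ∈ ℝ^m, c ∈ ℝⁿ, with X = {x : Ax ≤ b} nonempty and with the LP min{cᵀx : Ax ≤ b} having an optimal solution. Let γ > 0, α ∈ (0,1), and F_DR(x) = (1-2α)x + 2α·Π_X(x) - 2αγc be the Douglas–Rachford operator for this LP. Then there exists R > 0 such that dist(x, 𝓕) ≤ R implies dist(x, 𝓕) ≤ (1/(2α))·‖F_DR(x) - x‖, where 𝓕 is the fixed-point set of F_DR; consequently for such x, dist(F_DR(x), 𝓕) ≤ (1 - 2α(1-α))·dist(x, 𝓕). -/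
/-!
The fixed points of `F` are the points `z` with `z + γ c` in the optimal face `X*`, and
`‖F x - x‖ = 2 α ‖x - (P x - γ c)‖`, so the error bound holds as soon as `P x ∈ X*`.
Since `X` is a polyhedron, the objective is sharp: `σ · dist(p, X*) ≤ ⟪c, p⟫ - min` on `X`,
by a compactness argument over the finitely many sets of active constraints.  Combining this
with the variational inequality of `P x`, tested at its nearest point in `X*`, and with the
nonexpansiveness of `I - P` shows that `P x ∈ X*` whenever `x` is within `γ σ` of a fixed
point.  The contraction follows from the error bound and the averagedness inequality
`‖F x - z‖² ≤ ‖x - z‖² - (1 - α) / α · ‖F x - x‖²` at fixed points `z`, using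
`√(1 - t) ≤ 1 - t / 2`.
-/

open Metric RealInnerProductSpace Set Filter Topology Function

section NearestPoint

variable {E : Type*} [NormedAddCommGroup E] [InnerProductSpace ℝ E]

theorem forall_norm_sub_le_iff_forall_inner_le_zero {X : Set E} (hX : Convex ℝ X) {x q : E}
    (hq : q ∈ X) : (∀ y ∈ X, ‖x - q‖ ≤ ‖x - y‖) ↔ ∀ y ∈ X, ⟪x - q, y - q⟫ ≤ 0 := by
  have : Nonempty X := ⟨⟨q, hq⟩⟩
  have hbdd : BddBelow (range fun w : X => ‖x - w‖) :=
    ⟨0, forall_mem_range.2 fun _ => norm_nonneg _⟩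
  rw [← norm_eq_iInf_iff_real_inner_le_zero hX hq]
  exact ⟨fun h => le_antisymm (le_ciInf fun w => h w w.2) (ciInf_le hbdd ⟨q, hq⟩),
    fun h y hy => h ▸ ciInf_le hbdd ⟨y, hy⟩⟩

def IsNearestPointMap (X : Set E) (P : E → E) : Prop :=
  ∀ x, P x ∈ X ∧ ∀ y ∈ X, ‖x - P x‖ ≤ ‖x - y‖

namespace IsNearestPointMap

variable {X : Set E} {P : E → E}

theorem inner_sub_le_zero (hP : IsNearestPointMap X P) (hX : Convex ℝ X) (x : E) {y : E}
    (hy : y ∈ X) : ⟪x - P x, y - P x⟫ ≤ 0 :=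
  (forall_norm_sub_le_iff_forall_inner_le_zero hX (hP x).1).1 (hP x).2 y hy

theorem apply_eq_iff (hP : IsNearestPointMap X P) (hX : Convex ℝ X) {x q : E} :
    P x = q ↔ q ∈ X ∧ ∀ y ∈ X, ⟪x - q, y - q⟫ ≤ 0 := by
  refine ⟨?_, fun ⟨hq, hvar⟩ => ?_⟩
  · rintro rfl
    exact ⟨(hP x).1, fun y hy => hP.inner_sub_le_zero hX x hy⟩
  · have h₁ := hP.inner_sub_le_zero hX x hq
    have h₂ := hvar (P x) (hP x).1
    have hsq : ‖P x - q‖ ^ 2 = ⟪x - q, P x - q⟫ + ⟪x - P x, q - P x⟫ := by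
      rw [← real_inner_self_eq_norm_sq, show q - P x = -(P x - q) by abel, inner_neg_right,
        ← sub_eq_add_neg, ← inner_sub_left, sub_sub_sub_cancel_left]
    have : ‖P x - q‖ ^ 2 ≤ 0 := by linarith
    simpa [sub_eq_zero] using this

theorem norm_sub_sq_le_inner (hP : IsNearestPointMap X P) (hX : Convex ℝ X) (x y : E) :
    ‖P x - P y‖ ^ 2 ≤ ⟪x - y, P x - P y⟫ := by
  have h₁ := hP.inner_sub_le_zero hX x (hP y).1
  have h₂ := hP.inner_sub_le_zero hX y (hP x).1
  have hsq : ‖P x - P y‖ ^ 2 - ⟪x - y, P x - P y⟫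
      = ⟪x - P x, P y - P x⟫ + ⟪y - P y, P x - P y⟫ := by
    rw [← real_inner_self_eq_norm_sq, ← inner_sub_left, show P y - P x = -(P x - P y) by abel,
      inner_neg_right, neg_add_eq_sub, ← inner_sub_left]
    congr 1
    abel
  linarith

theorem lipschitzWith_one (hP : IsNearestPointMap X P) (hX : Convex ℝ X) : LipschitzWith 1 P :=
  LipschitzWith.mk_one fun x y => by
    rw [dist_eq_norm, dist_eq_norm]
    nlinarith [(hP.norm_sub_sq_le_inner hX x y).trans (real_inner_le_norm _ _),
      norm_nonneg (P x - P y), norm_nonneg (x - y)]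

theorem norm_sub_sub_le (hP : IsNearestPointMap X P) (hX : Convex ℝ X) (x y : E) :
    ‖(x - y) - (P x - P y)‖ ≤ ‖x - y‖ := by
  refine le_of_sq_le_sq ?_ (norm_nonneg _)
  rw [norm_sub_sq_real]
  nlinarith [hP.norm_sub_sq_le_inner hX x y]

theorem norm_two_smul_sub_sub_le (hP : IsNearestPointMap X P) (hX : Convex ℝ X) (x y : E) :
    ‖(2 : ℝ) • (P x - P y) - (x - y)‖ ≤ ‖x - y‖ := by
  refine le_of_sq_le_sq ?_ (norm_nonneg _)
  rw [norm_sub_sq_real, norm_smul, real_inner_smul_left, real_inner_comm]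
  norm_num
  nlinarith [hP.norm_sub_sq_le_inner hX x y]

end IsNearestPointMap

end NearestPoint

/-- `√(1 - t) ≤ 1 - t / 2`. -/
theorem le_one_sub_half_mul_of_sq_le {a D t : ℝ} (hD : 0 ≤ D) (h : a ^ 2 ≤ (1 - t) * D ^ 2) :
    a ≤ (1 - t / 2) * D := by
  have hnonneg : 0 ≤ (1 - t / 2) * D := by
    rcases hD.eq_or_lt with rfl | hD
    · simp
    · nlinarith [sq_nonneg a, mul_pos hD hD]
  refine le_of_sq_le_sq ?_ hnonneg
  nlinarith [sq_nonneg (t * D)]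

theorem infDist_le_of_sq_dist_le_of_errorBound {M : Type*} [PseudoMetricSpace M] [ProperSpace M]
    {T : M → M} {S : Set M} (hS : IsClosed S) {κ K : ℝ} (hκ : 0 ≤ κ) {x : M}
    (hT : ∀ z ∈ S, dist (T x) z ^ 2 ≤ dist x z ^ 2 - κ * dist (T x) x ^ 2)
    (herr : infDist x S ≤ K * dist (T x) x) :
    infDist (T x) S ≤ (1 - κ / (2 * K ^ 2)) * infDist x S := by
  rcases S.eq_empty_or_nonempty with rfl | hSne
  · simp
  obtain ⟨z, hzS, hxz⟩ := hS.exists_infDist_eq_dist hSne x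
  have hD : 0 ≤ infDist x S := infDist_nonneg
  have hκD : κ / K ^ 2 * infDist x S ^ 2 ≤ κ * dist (T x) x ^ 2 := by
    rcases eq_or_ne K 0 with rfl | hK
    · rw [zero_pow two_ne_zero, div_zero, zero_mul]
      positivity
    · calc κ / K ^ 2 * infDist x S ^ 2 ≤ κ / K ^ 2 * (K * dist (T x) x) ^ 2 := by gcongr
        _ = κ * dist (T x) x ^ 2 := by field_simp
  have hsq : dist (T x) z ^ 2 ≤ (1 - κ / K ^ 2) * infDist x S ^ 2 := by
    nlinarith [hT z hzS]
  calc infDist (T x) S ≤ dist (T x) z := infDist_le_dist_of_mem hzS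
    _ ≤ (1 - κ / K ^ 2 / 2) * infDist x S :=
      le_one_sub_half_mul_of_sq_le hD hsq
    _ = (1 - κ / (2 * K ^ 2)) * infDist x S := by ring

section DouglasRachford

variable {E : Type*} [NormedAddCommGroup E] [InnerProductSpace ℝ E]

theorem norm_one_sub_smul_add_smul_sq_le {u w : E} {t : ℝ} (ht : 0 ≤ t) (hw : ‖w‖ ≤ ‖u‖) :
    ‖(1 - t) • u + t • w‖ ^ 2 ≤ ‖u‖ ^ 2 - t * (1 - t) * ‖u - w‖ ^ 2 := by
  rw [norm_add_sq_real, norm_sub_sq_real, norm_smul, norm_smul, real_inner_smul_left,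
    real_inner_smul_right, Real.norm_eq_abs, Real.norm_eq_abs, mul_pow, mul_pow, sq_abs, sq_abs]
  nlinarith [mul_le_mul_of_nonneg_left (pow_le_pow_left₀ (norm_nonneg w) hw 2) ht]

/-- The relaxed Douglas–Rachford operator `(1 - α) x + α (R_g ∘ R_f) x` for minimizing `⟪c, x⟫`
over `X`, where `P` is the projection onto `X`: the reflections are `R_f = 2 P - I` for `f` the
indicator of `X`, and `R_g y = y - 2 γ c` for `g = ⟪c, ·⟫`. -/
def douglasRachford (P : E → E) (c : E) (γ α : ℝ) (x : E) : E :=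
  (1 - 2 * α) • x + (2 * α) • P x - (2 * α * γ) • c

variable {X : Set E} {P : E → E} {c : E} {γ α : ℝ}

theorem douglasRachford_sub_self (x : E) :
    douglasRachford P c γ α x - x = (2 * α) • (P x - γ • c - x) := by
  unfold douglasRachford
  module

theorem isFixedPt_douglasRachford_iff (hα : α ≠ 0) {x : E} :
    IsFixedPt (douglasRachford P c γ α) x ↔ P x = x + γ • c := by
  rw [IsFixedPt, ← sub_eq_zero, douglasRachford_sub_self, smul_eq_zero, sub_sub, sub_eq_zero,
    add_comm]
  simp [hα]

theorem infDist_le_norm_douglasRachford_sub (hα : 0 < α) {x : E} {S : Set E}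
    (hS : P x - γ • c ∈ S) : infDist x S ≤ 1 / (2 * α) * ‖douglasRachford P c γ α x - x‖ := by
  rw [douglasRachford_sub_self, norm_smul, Real.norm_of_nonneg (by positivity), ← mul_assoc,
    one_div_mul_cancel (by positivity), one_mul, ← dist_eq_norm, dist_comm]
  exact infDist_le_dist_of_mem hS

namespace IsNearestPointMap

theorem apply_eq_add_smul_iff (hP : IsNearestPointMap X P) (hX : Convex ℝ X) (hγ : 0 < γ)
    {x : E} : P x = x + γ • c ↔ x + γ • c ∈ X ∧ ∀ y ∈ X, ⟪c, x + γ • c⟫ ≤ ⟪c, y⟫ := by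
  rw [hP.apply_eq_iff hX]
  refine and_congr_right fun _ => forall₂_congr fun y _ => ?_
  rw [show x - (x + γ • c) = -(γ • c) by abel, inner_neg_left, real_inner_smul_left,
    inner_sub_right]
  constructor <;> intro h <;> nlinarith

theorem norm_douglasRachford_sub_sq_le (hP : IsNearestPointMap X P) (hX : Convex ℝ X)
    (hα : 0 < α) {z : E} (hz : P z = z + γ • c) (x : E) :
    ‖douglasRachford P c γ α x - z‖ ^ 2
      ≤ ‖x - z‖ ^ 2 - (1 - α) / α * ‖douglasRachford P c γ α x - x‖ ^ 2 := by
  set w := (2 : ℝ) • (P x - P z) - (x - z)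
  have hFz : douglasRachford P c γ α x - z = (1 - α) • (x - z) + α • w := by
    simp only [w, douglasRachford, hz]
    module
  have hFx : douglasRachford P c γ α x - x = α • (w - (x - z)) := by
    simp only [w, douglasRachford, hz]
    module
  have hw := hP.norm_two_smul_sub_sub_le hX x z
  rw [hFz, hFx, norm_smul, Real.norm_of_nonneg hα.le, norm_sub_rev w]
  convert norm_one_sub_smul_add_smul_sq_le hα.le hw using 2
  field_simp
  rfl

theorem apply_mem_of_sharp [ProperSpace E] (hP : IsNearestPointMap X P) (hX : Convex ℝ X)
    (hγ : 0 < γ) {Y : Set E} {σ v : ℝ} (hYX : Y ⊆ X) (hYc : ∀ y ∈ Y, ⟪c, y⟫ = v)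
    (hY : IsClosed Y) (hsharp : ∀ p ∈ X, σ * infDist p Y ≤ ⟪c, p⟫ - v) {x z : E}
    (hz : z + γ • c ∈ Y) (hxz : ‖x - z‖ < γ * σ) : P x ∈ Y := by
  have hσ : 0 < σ := pos_of_mul_pos_right ((norm_nonneg _).trans_lt hxz) hγ.le
  have hv : ∀ y ∈ X, v ≤ ⟪c, y⟫ := fun y hy => by
    nlinarith [hsharp y hy, infDist_nonneg (x := y) (s := Y)]
  have hPz : P z = z + γ • c :=
    (hP.apply_eq_add_smul_iff hX hγ).2 ⟨hYX hz, fun y hy => hYc _ hz ▸ hv y hy⟩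
  obtain ⟨y, hyY, hdist⟩ := hY.exists_infDist_eq_dist ⟨_, hz⟩ (P x)
  rw [dist_eq_norm] at hdist
  have hgap : γ * (⟪c, P x⟫ - v) ≤ ‖x - z‖ * ‖P x - y‖ := by
    have hvar := hP.inner_sub_le_zero hX x (hYX hyY)
    rw [show x - P x = ((x - z) - (P x - P z)) - γ • c by rw [hPz]; abel,
      show y - P x = -(P x - y) by abel, inner_neg_right, inner_sub_left, real_inner_smul_left,
      inner_sub_right c, hYc y hyY] at hvar
    nlinarith [real_inner_le_norm ((x - z) - (P x - P z)) (P x - y),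
      mul_le_mul_of_nonneg_right (hP.norm_sub_sub_le hX x z) (norm_nonneg (P x - y))]
  have hsharpPx := hsharp (P x) (hP x).1
  rw [hdist] at hsharpPx
  have : ‖P x - y‖ = 0 := by nlinarith [norm_nonneg (P x - y)]
  rwa [norm_eq_zero.1 this |> sub_eq_zero.1]

theorem mem_fixedPoints_douglasRachford_iff (hP : IsNearestPointMap X P) (hX : Convex ℝ X)
    (hγ : 0 < γ) (hα : α ≠ 0) {xs : E} (hxs : xs ∈ X) (hmin : ∀ y ∈ X, ⟪c, xs⟫ ≤ ⟪c, y⟫) {z : E} :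
    z ∈ fixedPoints (douglasRachford P c γ α) ↔ z + γ • c ∈ X ∩ {y | ⟪c, y⟫ = ⟪c, xs⟫} := by
  rw [mem_fixedPoints, isFixedPt_douglasRachford_iff hα, hP.apply_eq_add_smul_iff hX hγ]
  exact ⟨fun ⟨hz, hzmin⟩ => ⟨hz, le_antisymm (hzmin xs hxs) (hmin _ hz)⟩,
    fun ⟨hz, (hzv : _ = _)⟩ => ⟨hz, fun y hy => hzv ▸ hmin y hy⟩⟩

theorem infDist_fixedPoints_le [ProperSpace E] (hP : IsNearestPointMap X P) (hX : Convex ℝ X)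
    (hXc : IsClosed X) (hγ : 0 < γ) (hα : 0 < α) {xs : E} {σ : ℝ} (hxs : xs ∈ X)
    (hmin : ∀ y ∈ X, ⟪c, xs⟫ ≤ ⟪c, y⟫)
    (hsharp : ∀ p ∈ X, σ * infDist p (X ∩ {y | ⟪c, y⟫ = ⟪c, xs⟫}) ≤ ⟪c, p⟫ - ⟪c, xs⟫) {x : E}
    (hx : infDist x (fixedPoints (douglasRachford P c γ α)) < γ * σ) :
    infDist x (fixedPoints (douglasRachford P c γ α))
      ≤ 1 / (2 * α) * ‖douglasRachford P c γ α x - x‖ := by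
  have hFix z := hP.mem_fixedPoints_douglasRachford_iff hX hγ hα.ne' hxs hmin (z := z)
  obtain ⟨z, hz, hxz⟩ :=
    (infDist_lt_iff ⟨xs - γ • c, (hFix _).2 (by simpa using hxs)⟩).1 hx
  have hPx := hP.apply_mem_of_sharp hX hγ inter_subset_left (fun y hy => hy.2)
    (hXc.inter (isClosed_eq (by fun_prop) continuous_const)) hsharp ((hFix z).1 hz)
    (by rwa [← dist_eq_norm])
  exact infDist_le_norm_douglasRachford_sub hα ((hFix _).2 (by rwa [sub_add_cancel]))

theorem infDist_douglasRachford_le [ProperSpace E] (hP : IsNearestPointMap X P)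
    (hX : Convex ℝ X) (hα : α ∈ Ioo 0 1) {x : E}
    (herr : infDist x (fixedPoints (douglasRachford P c γ α))
      ≤ 1 / (2 * α) * ‖douglasRachford P c γ α x - x‖) :
    infDist (douglasRachford P c γ α x) (fixedPoints (douglasRachford P c γ α))
      ≤ (1 - 2 * α * (1 - α)) * infDist x (fixedPoints (douglasRachford P c γ α)) := by
  obtain ⟨hα0, hα1⟩ := hα
  have hclosed : IsClosed (fixedPoints (douglasRachford P c γ α)) := by
    have := (hP.lipschitzWith_one hX).continuous
    exact isClosed_fixedPoints (by unfold douglasRachford; fun_prop)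
  have hquasi : ∀ z ∈ fixedPoints (douglasRachford P c γ α),
      dist (douglasRachford P c γ α x) z ^ 2
        ≤ dist x z ^ 2 - (1 - α) / α * dist (douglasRachford P c γ α x) x ^ 2 := fun z hz => by
    simpa only [dist_eq_norm] using hP.norm_douglasRachford_sub_sq_le hX hα0
      ((isFixedPt_douglasRachford_iff hα0.ne').1 hz) x
  convert infDist_le_of_sq_dist_le_of_errorBound hclosed
    (div_nonneg (sub_nonneg.2 hα1.le) hα0.le) hquasi (herr.trans_eq (by rw [dist_eq_norm]))
    using 2
  field_simp

end IsNearestPointMap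

end DouglasRachford

section Polyhedron

variable {ι E : Type*} [NormedAddCommGroup E] [InnerProductSpace ℝ E]

def polyhedron (a : ι → E) (b : ι → ℝ) : Set E :=
  {x | ∀ i, ⟪a i, x⟫ ≤ b i}

theorem isClosed_polyhedron (a : ι → E) (b : ι → ℝ) : IsClosed (polyhedron a b) := by
  simp only [polyhedron, ofPred_forall]
  exact isClosed_iInter fun i => isClosed_le (by fun_prop) continuous_const

theorem convex_polyhedron (a : ι → E) (b : ι → ℝ) : Convex ℝ (polyhedron a b) := by
  simp only [polyhedron, ofPred_forall]
  exact convex_iInter fun i => convex_halfSpace_le (innerₛₗ ℝ (a i)).isLinear (b i)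

theorem eventually_add_smul_mem_polyhedron [Finite ι] {a : ι → E} {b : ι → ℝ} {q w : E}
    (hq : q ∈ polyhedron a b) (hw : ∀ i, ⟪a i, q⟫ = b i → ⟪a i, w⟫ ≤ 0) :
    ∀ᶠ t in 𝓝[>] (0 : ℝ), q + t • w ∈ polyhedron a b := by
  refine eventually_all.2 fun i => ?_
  simp only [inner_add_right, real_inner_smul_right]
  rcases (hq i).eq_or_lt with hi | hi
  · filter_upwards [self_mem_nhdsWithin] with t (ht : 0 < t)
    nlinarith [hw i hi]
  · have hlim : Tendsto (fun t : ℝ => ⟪a i, q⟫ + t * ⟪a i, w⟫) (𝓝[>] 0) (𝓝 ⟪a i, q⟫) := by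
      have hcont : Continuous fun t : ℝ => ⟪a i, q⟫ + t * ⟪a i, w⟫ := by fun_prop
      simpa using (hcont.tendsto 0).mono_left nhdsWithin_le_nhds
    exact (hlim.eventually_lt_const hi).mono fun _ => le_of_lt

/-- If `q` is a nearest point of the optimal face `{y ∈ polyhedron a b | ⟪c, y⟫ = v}` to a
feasible point `p`, and `S` is the set of constraints active at `q`, then `p - q` lies in
`feasibleNormalCone a c S`. -/
def feasibleNormalCone (a : ι → E) (c : E) (S : Set ι) : Set E :=
  {d | (∀ i ∈ S, ⟪a i, d⟫ ≤ 0) ∧ 0 ≤ ⟪c, d⟫ ∧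
    ∀ w, (∀ i ∈ S, ⟪a i, w⟫ ≤ 0) → ⟪c, w⟫ = 0 → ⟪d, w⟫ ≤ 0}

variable {a : ι → E} {c : E} {S : Set ι} {d : E}

theorem isClosed_feasibleNormalCone (a : ι → E) (c : E) (S : Set ι) :
    IsClosed (feasibleNormalCone a c S) := by
  simp only [feasibleNormalCone, ofPred_and, ofPred_forall]
  exact (isClosed_biInter fun i _ => isClosed_le (by fun_prop) continuous_const).inter
    ((isClosed_le continuous_const (by fun_prop)).inter
      (isClosed_iInter fun w => isClosed_iInter fun _ => isClosed_iInter fun _ =>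
        isClosed_le (by fun_prop) continuous_const))

theorem inner_pos_of_mem_feasibleNormalCone (hd : d ∈ feasibleNormalCone a c S) (hd0 : d ≠ 0) :
    0 < ⟪c, d⟫ := by
  obtain ⟨hdS, hcd, hpolar⟩ := hd
  exact hcd.lt_of_ne fun h => hd0 (real_inner_self_nonpos.1 (hpolar d hdS h.symm))

theorem smul_mem_feasibleNormalCone {r : ℝ} (hr : 0 ≤ r) (hd : d ∈ feasibleNormalCone a c S) :
    r • d ∈ feasibleNormalCone a c S := by
  obtain ⟨hdS, hcd, hpolar⟩ := hd
  refine ⟨fun i hi => ?_, ?_, fun w hw hcw => ?_⟩ <;>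
    simp only [real_inner_smul_left, real_inner_smul_right]
  · exact mul_nonpos_of_nonneg_of_nonpos hr (hdS i hi)
  · exact mul_nonneg hr hcd
  · exact mul_nonpos_of_nonneg_of_nonpos hr (hpolar w hw hcw)

theorem exists_pos_mul_norm_le_inner_of_mem_feasibleNormalCone [Finite ι] [FiniteDimensional ℝ E]
    (a : ι → E) (c : E) :
    ∃ σ > 0, ∀ S d, d ∈ feasibleNormalCone a c S → σ * ‖d‖ ≤ ⟪c, d⟫ := by
  set U := (⋃ S, feasibleNormalCone a c S) ∩ sphere 0 1
  have hU : IsCompact U := (isCompact_sphere 0 1).inter_left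
    (isClosed_iUnion_of_finite fun S => isClosed_feasibleNormalCone a c S)
  obtain ⟨σ, hσ, hσU⟩ := hU.exists_forall_le' (f := fun d => ⟪c, d⟫) (by fun_prop) fun d hd =>
    have ⟨S, hS⟩ := mem_iUnion.1 hd.1
    inner_pos_of_mem_feasibleNormalCone hS (ne_zero_of_mem_unit_sphere ⟨d, hd.2⟩)
  refine ⟨σ, hσ, fun S d hd => ?_⟩
  rcases eq_or_ne d 0 with rfl | hd0
  · simp
  have hpos : 0 < ‖d‖ := norm_pos_iff.2 hd0
  have hunit := hσU (‖d‖⁻¹ • d)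
    ⟨mem_iUnion.2 ⟨S, smul_mem_feasibleNormalCone (by positivity) hd⟩, by simp [norm_smul, hd0]⟩
  rw [real_inner_smul_right] at hunit
  calc σ * ‖d‖ ≤ ‖d‖⁻¹ * ⟪c, d⟫ * ‖d‖ := by gcongr
    _ = ⟪c, d⟫ := by field_simp

theorem sub_mem_feasibleNormalCone [Finite ι] {b : ι → ℝ} {v : ℝ} {p q : E}
    (hp : p ∈ polyhedron a b) (hq : q ∈ polyhedron a b ∩ {y | ⟪c, y⟫ = v})
    (hv : ∀ y ∈ polyhedron a b, v ≤ ⟪c, y⟫)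
    (hvar : ∀ y ∈ polyhedron a b ∩ {y | ⟪c, y⟫ = v}, ⟪p - q, y - q⟫ ≤ 0) :
    p - q ∈ feasibleNormalCone a c {i | ⟪a i, q⟫ = b i} := by
  obtain ⟨hqX, hqv : ⟪c, q⟫ = v⟩ := hq
  refine ⟨fun i (hi : ⟪a i, q⟫ = b i) => ?_, ?_, fun w hw hcw => ?_⟩
  · rw [inner_sub_right, hi]
    linarith [hp i]
  · rw [inner_sub_right, hqv]
    linarith [hv p hp]
  · obtain ⟨t, htX, ht : 0 < t⟩ :=
      ((eventually_add_smul_mem_polyhedron hqX hw).and self_mem_nhdsWithin).exists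
    have := hvar (q + t • w) ⟨htX, by simp [inner_add_right, real_inner_smul_right, hcw, hqv]⟩
    rw [add_sub_cancel_left, real_inner_smul_right] at this
    nlinarith

theorem exists_pos_mul_infDist_le_inner_sub [Finite ι] [FiniteDimensional ℝ E] (a : ι → E)
    (b : ι → ℝ) {v : ℝ} (hv : ∀ y ∈ polyhedron a b, v ≤ ⟪c, y⟫) :
    ∃ σ > 0, ∀ p ∈ polyhedron a b,
      σ * infDist p (polyhedron a b ∩ {y | ⟪c, y⟫ = v}) ≤ ⟪c, p⟫ - v := by
  obtain ⟨σ, hσ, hcone⟩ := exists_pos_mul_norm_le_inner_of_mem_feasibleNormalCone a c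
  refine ⟨σ, hσ, fun p hp => ?_⟩
  set Y := polyhedron a b ∩ {y | ⟪c, y⟫ = v}
  rcases Y.eq_empty_or_nonempty with hY | hY
  · simpa [hY] using hv p hp
  have hYconv : Convex ℝ Y :=
    (convex_polyhedron a b).inter (convex_hyperplane (innerₛₗ ℝ c).isLinear v)
  have hYclosed : IsClosed Y :=
    (isClosed_polyhedron a b).inter (isClosed_eq (by fun_prop) continuous_const)
  obtain ⟨q, hqY, hq⟩ := exists_norm_eq_iInf_of_complete_convex hY hYclosed.isComplete hYconv p
  have hvar := (norm_eq_iInf_iff_real_inner_le_zero hYconv hqY).1 hq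
  calc σ * infDist p Y ≤ σ * ‖p - q‖ := by
        gcongr
        exact (infDist_le_dist_of_mem hqY).trans_eq (dist_eq_norm p q)
    _ ≤ ⟪c, p - q⟫ := hcone _ _ (sub_mem_feasibleNormalCone hp hqY hv hvar)
    _ = ⟪c, p⟫ - v := by rw [inner_sub_right, (hqY.2 : ⟪c, q⟫ = v)]

end Polyhedron

theorem Matrix.setOf_toEuclideanLin_le_eq_polyhedron {m n : Type*} [Fintype n] [DecidableEq n]
    (A : Matrix m n ℝ) (b : m → ℝ) :
    {x | ∀ i, Matrix.toEuclideanLin A x i ≤ b i}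
      = polyhedron (fun i => WithLp.toLp 2 (A i)) b := by
  ext x
  simp [polyhedron, PiLp.inner_apply, Matrix.mulVec, dotProduct, mul_comm]

theorem stmt_15_general {m n : ℕ} (A : Matrix (Fin m) (Fin n) ℝ) (b : Fin m → ℝ)
    (c : EuclideanSpace ℝ (Fin n)) (γ α : ℝ) (hγ : 0 < γ) (hα : α ∈ Set.Ioo (0:ℝ) 1)
    (X : Set (EuclideanSpace ℝ (Fin n)))
    (hX : X = {x | ∀ i, Matrix.toEuclideanLin A x i ≤ b i})
    (hopt : ∃ x ∈ X, ∀ y ∈ X, ⟪c, x⟫ ≤ ⟪c, y⟫)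
    (proj : EuclideanSpace ℝ (Fin n) → EuclideanSpace ℝ (Fin n))
    (hproj : ∀ x, proj x ∈ X ∧ ∀ y ∈ X, ‖x - proj x‖ ≤ ‖x - y‖)
    (F : EuclideanSpace ℝ (Fin n) → EuclideanSpace ℝ (Fin n))
    (hF : ∀ x, F x = (1 - 2 * α) • x + (2 * α) • proj x - (2 * α * γ) • c)
    (𝓕 : Set (EuclideanSpace ℝ (Fin n))) (h𝓕 : 𝓕 = {x | F x = x}) :
    ∃ R > 0, ∀ x, infDist x 𝓕 ≤ R →
      infDist x 𝓕 ≤ (1 / (2 * α)) * ‖F x - x‖ ∧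
      infDist (F x) 𝓕 ≤ (1 - 2 * α * (1 - α)) * infDist x 𝓕 := by
  obtain ⟨xs, hxs, hmin⟩ := hopt
  rw [Matrix.setOf_toEuclideanLin_le_eq_polyhedron] at hX
  subst hX
  obtain rfl : F = douglasRachford proj c γ α := funext hF
  obtain rfl : 𝓕 = fixedPoints (douglasRachford proj c γ α) := h𝓕
  have hP : IsNearestPointMap _ proj := hproj
  have hXconv := convex_polyhedron (fun i => WithLp.toLp 2 (A i)) b
  obtain ⟨σ, hσ, hsharp⟩ := exists_pos_mul_infDist_le_inner_sub _ b hmin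
  refine ⟨γ * σ / 2, by positivity, fun x hx => ?_⟩
  have herr := hP.infDist_fixedPoints_le hXconv (isClosed_polyhedron _ b) hγ hα.1 hxs hmin hsharp
    (by linarith [mul_pos hγ hσ])
  exact ⟨herr, hP.infDist_douglasRachford_le hXconv hα herr⟩

theorem stmt_15 {m n : ℕ} (A : Matrix (Fin m) (Fin n) ℝ) (b : Fin m → ℝ)
    (c : EuclideanSpace ℝ (Fin n)) (γ α : ℝ) (hγ : 0 < γ) (hα : α ∈ Set.Ioo (0:ℝ) 1)
    (X : Set (EuclideanSpace ℝ (Fin n)))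
    (hX : X = {x | ∀ i, Matrix.toEuclideanLin A x i ≤ b i})
    (hXne : X.Nonempty)
    (hopt : ∃ x ∈ X, ∀ y ∈ X, ⟪c, x⟫ ≤ ⟪c, y⟫)
    (proj : EuclideanSpace ℝ (Fin n) → EuclideanSpace ℝ (Fin n))
    (hproj : ∀ x, proj x ∈ X ∧ ∀ y ∈ X, ‖x - proj x‖ ≤ ‖x - y‖)
    (F : EuclideanSpace ℝ (Fin n) → EuclideanSpace ℝ (Fin n))
    (hF : ∀ x, F x = (1 - 2 * α) • x + (2 * α) • proj x - (2 * α * γ) • c)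
    (𝓕 : Set (EuclideanSpace ℝ (Fin n))) (h𝓕 : 𝓕 = {x | F x = x}) :
    ∃ R > 0, ∀ x, infDist x 𝓕 ≤ R →
      infDist x 𝓕 ≤ (1 / (2 * α)) * ‖F x - x‖ ∧
      infDist (F x) 𝓕 ≤ (1 - 2 * α * (1 - α)) * infDist x 𝓕 :=
  stmt_15_general A b c γ α hγ hα X hX hopt proj hproj F hF 𝓕 h𝓕
end

section
/- Let Q ∈ ℝ^{n×n} be symmetric positive semidefinite, γ > 0 with γλ_max(Q) < 1, α ∈ (0,1), and let A_J ∈ ℝ^{|J|×n} with rank(A_Jᵀ) = |J|. Define M_J = 2α(I - A_J†A_J - (γQ + I)⁻¹(I - 2A_J†A_J)). Then Null(M_J) ⊆ Null(Q) ∩ Null(A_J). -/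
theorem stmt_16 {n p : ℕ} (Q : Matrix (Fin n) (Fin n) ℝ) (hQ : Q.PosSemidef)
    (γ α : ℝ) (hγ : 0 < γ)
    (hγmax : ∀ i, γ * hQ.1.eigenvalues i < 1)
    (hα : α ∈ Set.Ioo (0:ℝ) 1)
    (AJ : Matrix (Fin p) (Fin n) ℝ) (hrank : AJ.transpose.rank = p)
    (pinv : Matrix (Fin n) (Fin p) ℝ)
    (hpinv : pinv = AJ.transpose * (AJ * AJ.transpose)⁻¹)
    (M : Matrix (Fin n) (Fin n) ℝ)
    (hM : M = (2 * α) • (1 - pinv * AJ - (γ • Q + 1)⁻¹ * (1 - (2:ℝ) • (pinv * AJ)))) :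
    ∀ x : Fin n → ℝ, M.mulVec x = 0 → Q.mulVec x = 0 ∧ AJ.mulVec x = 0 := by
  -- AAᵀ is invertible
  have hAA : IsUnit (AJ * AJ.transpose) := by
    rw [← Matrix.mulVec_surjective_iff_isUnit]
    have hr : (AJ * AJ.transpose).rank = p := by
      rw [Matrix.rank_self_mul_transpose, ← Matrix.rank_transpose, hrank]
    have : LinearMap.range (AJ * AJ.transpose).mulVecLin = ⊤ := by
      apply Submodule.eq_top_of_finrank_eq
      rw [← Matrix.rank] at *
      simp [hr]
    intro y
    have := this ▸ Submodule.mem_top (x := y) (R := ℝ)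
    exact LinearMap.mem_range.mp this
  have hAAinv : (AJ * AJ.transpose) * (AJ * AJ.transpose)⁻¹ = 1 :=
    Matrix.mul_nonsing_inv _ (Matrix.isUnit_iff_isUnit_det _ |>.mp hAA)
  -- P is a projection
  set P : Matrix (Fin n) (Fin n) ℝ := pinv * AJ with hP
  have hAP : AJ * pinv = 1 := by
    rw [hpinv, ← Matrix.mul_assoc, hAAinv]
  have hPP : P * P = P := by
    rw [hP, Matrix.mul_assoc, ← Matrix.mul_assoc AJ, hAP, Matrix.one_mul]
  have hPsymm : P.transpose = P := by
    have hinvsymm : ((AJ * AJ.transpose)⁻¹).transpose = (AJ * AJ.transpose)⁻¹ := by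
      rw [Matrix.transpose_nonsing_inv]
      congr 1
      rw [Matrix.transpose_mul, Matrix.transpose_transpose]
    rw [hP, hpinv, Matrix.transpose_mul, Matrix.transpose_mul, hinvsymm,
      Matrix.transpose_transpose, Matrix.mul_assoc]
  -- S := γ•Q + 1 is positive definite
  set S : Matrix (Fin n) (Fin n) ℝ := γ • Q + 1 with hS
  have hSpd : S.PosDef := by
    have h1 : (γ • Q).PosSemidef := by
      constructor
      · show (γ • Q).conjTranspose = γ • Q
        rw [Matrix.conjTranspose_smul, hQ.1]
        simp
      · intro x
        exact (hQ.smul hγ.le).2 x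
    exact Matrix.PosDef.posSemidef_add h1 Matrix.PosDef.one
  have hSunit : IsUnit S.det := hSpd.det_pos.ne'.isUnit
  have hSinv : S * S⁻¹ = 1 := Matrix.mul_nonsing_inv _ hSunit
  -- key identity: S * M = (2α) • (γ • (Q * (1 - P)) + P)
  have hkey : S * M = (2 * α) • (γ • (Q * (1 - P)) + P) := by
    rw [hM, Matrix.mul_smul]
    congr 1
    rw [Matrix.mul_sub, Matrix.mul_sub, ← Matrix.mul_assoc S S⁻¹, hSinv, Matrix.one_mul]
    rw [hS]
    simp only [Matrix.add_mul, Matrix.mul_sub, Matrix.sub_mul, Matrix.mul_one, Matrix.one_mul,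
      Matrix.smul_mul, Matrix.mul_smul, smul_sub, smul_add]
    abel_nf
    module
  intro x hx
  have h2α : (2 * α) ≠ 0 := by
    have := hα.1; positivity
  have hLx : (γ • (Q * (1 - P)) + P).mulVec x = 0 := by
    have : (S * M).mulVec x = 0 := by
      rw [← Matrix.mulVec_mulVec, hx, Matrix.mulVec_zero]
    rw [hkey, Matrix.smul_mulVec] at this
    exact (smul_eq_zero.mp this).resolve_left h2α
  set w := (1 - P).mulVec x with hw
  set v := P.mulVec x with hv
  have hxwv : x = w + v := by
    rw [hw, hv, ← Matrix.add_mulVec]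
    simp
  have hmain : γ • Q.mulVec w + v = 0 := by
    have := hLx
    rwa [Matrix.add_mulVec, Matrix.smul_mulVec, ← Matrix.mulVec_mulVec] at this
  -- dotProduct w v = 0
  have hwv : dotProduct w v = 0 := by
    rw [hw, hv, Matrix.dotProduct_mulVec, Matrix.vecMul_mulVec]
    have : (1 - P).transpose * P = 0 := by
      rw [Matrix.transpose_sub, Matrix.transpose_one, hPsymm, Matrix.sub_mul,
        Matrix.one_mul, hPP, sub_self]
    rw [this, Matrix.vecMul_zero, zero_dotProduct]
  -- wᵀ Q w = 0
  have hQw : Q.mulVec w = 0 := by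
    have h0 : dotProduct w (γ • Q.mulVec w + v) = 0 := by rw [hmain, dotProduct_zero]
    rw [dotProduct_add, hwv, add_zero, dotProduct_smul, smul_eq_mul] at h0
    have : dotProduct w (Q.mulVec w) = 0 := by
      rcases mul_eq_zero.mp h0 with h | h
      · exact absurd h hγ.ne'
      · exact h
    have := (hQ.dotProduct_mulVec_zero_iff w).mp (by simpa using this)
    exact this
  have hv0 : v = 0 := by
    have := hmain
    rw [hQw, smul_zero, zero_add] at this
    exact this
  constructor
  · rw [hxwv, hv0, add_zero, hQw]
  · rw [hxwv, hv0, add_zero, hw, Matrix.mulVec_mulVec]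
    have : AJ * (1 - P) = 0 := by
      rw [Matrix.mul_sub, Matrix.mul_one, hP, ← Matrix.mul_assoc, hAP, Matrix.one_mul, sub_self]
    rw [this, Matrix.zero_mulVec]
end
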